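/- arXiv:math/0002149 — 7 statements merged into one kernel-verified Lean document; each statement's English description precedes it below -/
import Mathlib

section
/- If p(v,v) is a primitive t-th root of unity and n = t (or n = t·lᵏ when the ground field has characteristic l > 0), then the iterated skew commutators collapse: [u, vⁿ] = [...[[u,v],v],...,v] (n-fold) and [vⁿ, u] = [v,[...[v,u]...]] (n-fold). -/
/-! Right and left multiplication by `v` are commuting operators `r`, `l` on `A`, and with
`ζ = p(v,v)` the left iterated commutator is `L m = ∏_{j<m} (r - p(u,v) ζʲ l) u`; the right one is
the same with `r` and `l` swapped. For commuting `x, y` and a primitive `t`-th root of unity `ζ`,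
`∏_{j<t} (x - ζʲ y) = xᵗ - yᵗ`. In characteristic `ℓ` the product over `j < t ℓᵐ` is the `ℓᵐ`-th
power of that one by periodicity, and Frobenius turns it into `xⁿ - yⁿ`. So
`L n = u vⁿ - p(u,v)ⁿ vⁿ u = [u, vⁿ]`. -/

open Finset

theorem IsPrimitiveRoot.prod_range_sub_pow_mul_eq_pow_sub_pow {R : Type*} [CommRing R]
    [IsDomain R] {ζ : R} {n : ℕ} (h : IsPrimitiveRoot ζ n) (hn : 0 < n) (x y : R) :
    ∏ j ∈ range n, (x - ζ ^ j * y) = x ^ n - y ^ n := by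
  have : NeZero n := ⟨hn.ne'⟩
  rw [h.pow_sub_pow_eq_prod_sub_mul x y hn]
  refine prod_nbij (ζ ^ ·) (fun j _ => ?_)
    (fun i hi j hj => h.pow_inj (mem_range.1 hi) (mem_range.1 hj)) (fun ω hω => ?_) fun _ _ => rfl
  · rw [Polynomial.mem_nthRootsFinset hn, ← pow_mul, mul_comm, pow_mul, h.pow_eq_one, one_pow]
  · obtain ⟨i, hi, rfl⟩ := h.eq_pow_of_pow_eq_one ((Polynomial.mem_nthRootsFinset hn 1).1 hω)
    exact ⟨i, mem_range.2 hi, rfl⟩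

theorem Finset.prod_range_mul_eq_pow_of_periodic {M : Type*} [CommMonoid M] {f : ℕ → M} {t : ℕ}
    (hf : Function.Periodic f t) (m : ℕ) :
    ∏ j ∈ range (t * m), f j = (∏ j ∈ range t, f j) ^ m := by
  induction m with
  | zero => simp
  | succ m ih =>
    rw [mul_add_one, prod_range_add, ih, pow_succ]
    congr 1
    refine prod_congr rfl fun j _ => ?_
    simpa [add_comm, mul_comm] using hf.nat_mul m j

theorem prod_range_sub_pow_mul_eq_pow_sub_pow_mul_char_pow {R : Type*} [CommRing R] {p : ℕ}
    [Fact p.Prime] [CharP R p] {ζ : R} {t : ℕ} (hζ : ζ ^ t = 1) {x y : R}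
    (h : ∏ j ∈ range t, (x - ζ ^ j * y) = x ^ t - y ^ t) (m : ℕ) :
    ∏ j ∈ range (t * p ^ m), (x - ζ ^ j * y) = x ^ (t * p ^ m) - y ^ (t * p ^ m) := by
  have hper : Function.Periodic (fun j => x - ζ ^ j * y) t := fun j => by
    simp only [pow_add, hζ, mul_one]
  rw [prod_range_mul_eq_pow_of_periodic hper, h, sub_pow_char_pow, pow_mul, pow_mul]

theorem prod_range_sub_smul_eq_pow_sub_pow {k R : Type*} [Field k] [CommRing R] [Algebra k R]
    {ζ : k} {t n : ℕ} (hζ : IsPrimitiveRoot ζ t) (ht : 0 < t)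
    (hn : n = t ∨ (ringChar k ≠ 0 ∧ ∃ m : ℕ, n = t * ringChar k ^ m)) (x y : R) :
    ∏ j ∈ range n, (x - ζ ^ j • y) = x ^ n - y ^ n := by
  open MvPolynomial in
  -- the generic pair in the domain `k[X₀, X₁]`, of the same characteristic as `k`
  suffices huniv :
      ∏ j ∈ range n, (X 0 - ζ ^ j • X 1 : MvPolynomial (Fin 2) k) = X 0 ^ n - X 1 ^ n by
    simpa [map_prod] using congrArg (aeval ![x, y]) huniv
  simp_rw [MvPolynomial.smul_eq_C_mul, map_pow]
  have hC := hζ.map_of_injective (MvPolynomial.C_injective (Fin 2) k)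
  rcases hn with rfl | ⟨hchar, m, rfl⟩
  · exact hC.prod_range_sub_pow_mul_eq_pow_sub_pow ht _ _
  · have := ringChar.charP k
    have : Fact (ringChar k).Prime := ⟨CharP.char_prime_of_ne_zero k hchar⟩
    exact prod_range_sub_pow_mul_eq_pow_sub_pow_mul_char_pow hC.pow_eq_one
      (hC.prod_range_sub_pow_mul_eq_pow_sub_pow ht _ _) m

open scoped IsMulCommutative in
theorem Module.End.eq_pow_sub_smul_pow_of_recurrence {k M : Type*} [Field k] [AddCommGroup M]
    [Module k M] {f g : Module.End k M} (hfg : Commute f g) {ζ : k} {t n : ℕ}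
    (hζ : IsPrimitiveRoot ζ t) (ht : 0 < t)
    (hn : n = t ∨ (ringChar k ≠ 0 ∧ ∃ m : ℕ, n = t * ringChar k ^ m)) (c : k) (w : ℕ → M)
    (hw : ∀ m, w (m + 1) = f (w m) - (c * ζ ^ m) • g (w m)) :
    w n = (f ^ n) (w 0) - c ^ n • (g ^ n) (w 0) := by
  have : IsMulCommutative (Algebra.adjoin k {f, g}) :=
    Algebra.isMulCommutative_adjoin k (by
      rintro x (rfl | rfl) y (rfl | rfl) <;> first | rfl | exact hfg.eq | exact hfg.eq.symm)
  let F : Algebra.adjoin k {f, g} := ⟨f, Algebra.subset_adjoin (by simp)⟩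
  let G : Algebra.adjoin k {f, g} := ⟨g, Algebra.subset_adjoin (by simp)⟩
  have hw_prod :
      ∀ m, w m = (↑(∏ j ∈ range m, (F - ζ ^ j • c • G)) : Module.End k M) (w 0) := by
    intro m
    induction m with
    | zero => simp
    | succ m ih =>
      rw [hw, prod_range_succ_comm, Subalgebra.coe_mul, Module.End.mul_apply, ← ih]
      simp [F, G, smul_smul, mul_comm]
  rw [hw_prod n, prod_range_sub_smul_eq_pow_sub_pow hζ ht hn]
  simp [F, G, smul_pow]

/-- Restricted identities: if `p(v,v)` is a primitive `t`-th root of unity and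
`n = t`, or `n = t·lᵏ` where `l > 0` is the characteristic of the ground field,
then `[u, vⁿ]` equals the `n`-fold left-iterated skew commutator
`[...[[u,v],v]...,v]`, and `[vⁿ, u]` equals the `n`-fold right-iterated one. -/
theorem stmt_3 {k : Type*} [Field k] {A : Type*} [Ring A] [Algebra k A]
    {G : Type*} [CommMonoid G] (p : G →* G →* kˣ)
    (br : A → G → A → G → A)
    (hbr : ∀ (a : A) (da : G) (b : A) (db : G),
      br a da b db = a * b - ((p da db : kˣ) : k) • (b * a))
    (u v : A) (du dv : G) (t : ℕ) (ht : 0 < t)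
    (hroot : (p dv dv) ^ t = 1)
    (hprim : ∀ s : ℕ, 0 < s → s < t → (p dv dv) ^ s ≠ 1)
    (n : ℕ)
    (hn : n = t ∨ (ringChar k ≠ 0 ∧ ∃ m : ℕ, n = t * ringChar k ^ m))
    (L R : ℕ → A)
    (hL0 : L 0 = u) (hLs : ∀ m : ℕ, L (m + 1) = br (L m) (du * dv ^ m) v dv)
    (hR0 : R 0 = u) (hRs : ∀ m : ℕ, R (m + 1) = br v dv (R m) (dv ^ m * du)) :
    br u du (v ^ n) (dv ^ n) = L n ∧ br (v ^ n) (dv ^ n) u du = R n := by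
  have hζ : IsPrimitiveRoot ((p dv dv : kˣ) : k) t :=
    IsPrimitiveRoot.coe_units_iff.2 (.mk_of_lt _ ht hroot hprim)
  have hLR := LinearMap.commute_mulLeft_right (R := k) v v
  constructor
  · have hL := Module.End.eq_pow_sub_smul_pow_of_recurrence hLR.symm hζ ht hn (p du dv) L
      fun m => by simp [hLs, hbr]
    simp [hL, hbr, hL0, LinearMap.pow_mulLeft, LinearMap.pow_mulRight]
  · have hR := Module.End.eq_pow_sub_smul_pow_of_recurrence hLR hζ ht hn (p dv du) R
      fun m => by simp [hRs, hbr, mul_comm]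
    simp [hR, hbr, hR0, LinearMap.pow_mulLeft, LinearMap.pow_mulRight]
end

section
/- Every word c has a unique factorization c = u₁^{n₁} u₂^{n₂} ⋯ u_k^{n_k}, where u₁ < u₂ < ⋯ < u_k are standard (Lyndon) words and nᵢ ≥ 1 (Lyndon's theorem). -/
/-!
A Lyndon word `u` is smaller than each of its proper suffixes `s`, and the comparison is already
decided inside `s`, so it survives any continuation of `u` and of `s`. Hence `uv` is Lyndon
whenever `u < v` are Lyndon. Prepending the letters one at a time and merging a factor with its
successor while it is smaller yields a nonincreasing factorization into Lyndon words. It is unique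
because its first factor is the longest Lyndon prefix: a longer Lyndon prefix would have a proper
suffix that begins a product of factors smaller than the prefix itself. Grouping equal adjacent
factors into powers is a bijection onto the strictly decreasing form.

The order `wordLt` is the reverse of the lexicographic order on words over `αᵒᵈ`, so standard
words over `α` are the Lyndon words over `αᵒᵈ`.
-/

/-- Word order: `u < v` iff `v` is a proper prefix of `u`, or at the first
differing position the letter of `u` is smaller. -/
def wordLt {α : Type*} [LinearOrder α] (u v : List α) : Prop :=
  (v <+: u ∧ v ≠ u) ∨
    ∃ (w : List α) (a b : α) (u' v' : List α),
      u = w ++ a :: u' ∧ v = w ++ b :: v' ∧ a < b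

/-- A nonempty word is standard (Lyndon) if `vw > wv` for every factorization
into nonempty words. -/
def IsStandard {α : Type*} [LinearOrder α] (u : List α) : Prop :=
  u ≠ [] ∧ ∀ v w : List α, v ≠ [] → w ≠ [] → u = v ++ w → wordLt (w ++ v) (v ++ w)

open List

namespace List

variable {β : Type*} [LinearOrder β] {u v w d : List β}

theorem lt_append_of_ne_nil (hd : d ≠ []) : u < u ++ d := by
  obtain ⟨a, d, rfl⟩ := exists_cons_of_ne_nil hd
  simpa using append_left_lt (l₁ := u) (nil_lt_cons a d)

theorem IsPrefix.le' (h : u <+: v) : u ≤ v := by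
  obtain ⟨d, rfl⟩ := h
  rcases eq_or_ne d [] with rfl | hd
  · simp
  · exact (lt_append_of_ne_nil hd).le

theorem append_lt_append_left_iff : w ++ u < w ++ v ↔ u < v := by
  induction w with
  | nil => rfl
  | cons a w ih => simpa [cons_lt_cons_self] using ih

theorem lt_iff_prefix_or_exists : u < v ↔ (u <+: v ∧ u ≠ v) ∨
    ∃ (w : List β) (a b : β) (x y : List β), u = w ++ a :: x ∧ v = w ++ b :: y ∧ a < b := by
  refine ⟨fun h => ?_, ?_⟩
  · induction h with
    | nil => exact .inl ⟨nil_prefix, (cons_ne_nil _ _).symm⟩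
    | cons _ ih =>
      rcases ih with ⟨hp, hne⟩ | ⟨w, a, b, x, y, rfl, rfl, h⟩
      · exact .inl ⟨(prefix_cons_inj _).2 hp, by simpa using hne⟩
      · exact .inr ⟨_ :: w, a, b, x, y, rfl, rfl, h⟩
    | rel h => exact .inr ⟨[], _, _, _, _, rfl, rfl, h⟩
  · rintro (⟨⟨d, rfl⟩, hne⟩ | ⟨w, a, b, x, y, rfl, rfl, h⟩)
    · exact lt_append_of_ne_nil (by rintro rfl; simp at hne)
    · exact append_left_lt (Lex.rel h)

theorem prefix_or_forall_append_lt_append (h : u < v) :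
    u <+: v ∨ ∀ x y : List β, u ++ x < v ++ y := by
  rcases lt_iff_prefix_or_exists.1 h with ⟨hp, -⟩ | ⟨w, a, b, x, y, rfl, rfl, hab⟩
  · exact .inl hp
  · exact .inr fun _ _ => by simpa using append_left_lt (l₁ := w) (Lex.rel hab)

theorem append_lt_append_of_lt_of_length_le (h : u < v) (hl : v.length ≤ u.length)
    (x y : List β) : u ++ x < v ++ y :=
  (prefix_or_forall_append_lt_append h).resolve_left
    (fun hp => h.ne (hp.eq_of_length (le_antisymm hp.length_le hl))) x y

end List

section Lyndon

variable {β : Type*} [LinearOrder β] {u v s t : List β}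

def IsLyndon (u : List β) : Prop :=
  u ≠ [] ∧ ∀ v w : List β, v ≠ [] → w ≠ [] → u = v ++ w → u < w ++ v

theorem isLyndon_singleton (a : β) : IsLyndon [a] := by
  refine ⟨cons_ne_nil a [], fun v w hv hw h => absurd (congrArg length h) ?_⟩
  simp only [length_append, length_singleton]
  have := length_pos_iff.2 hv
  have := length_pos_iff.2 hw
  omega

namespace IsLyndon

theorem lt_of_suffix (hu : IsLyndon u) (h : u = t ++ s) (ht : t ≠ []) (hs : s ≠ []) :
    u < s := by
  have hlen : s.length < u.length := by simp [h, length_pos_iff.2 ht]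
  have hrot : u < s ++ t := hu.2 t s ht hs h
  by_contra hsu
  rcases (not_lt.1 hsu).lt_or_eq with hsu | rfl
  · rcases prefix_or_forall_append_lt_append hsu with ⟨d, rfl⟩ | hsu
    · have hd : d ≠ [] := by rintro rfl; simp at hlen
      have hdt : d < t := append_lt_append_left_iff.1 hrot
      have hlen' : t.length ≤ d.length := by
        have := congrArg length h
        simp only [length_append] at this
        omega
      exact lt_asymm (hu.2 s d hs hd rfl)
        (h ▸ append_lt_append_of_lt_of_length_le hdt hlen' s s)
    · exact lt_asymm hrot (by simpa using hsu t [])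
  · exact lt_irrefl _ hlen

theorem append_lt_suffix_append (hu : IsLyndon u) (h : u = t ++ s) (ht : t ≠ [])
    (hs : s ≠ []) (x y : List β) : u ++ x < s ++ y :=
  append_lt_append_of_lt_of_length_le (hu.lt_of_suffix h ht hs) (by simp [h]) x y

theorem append_lt_append_of_lt (hv : IsLyndon v) (hu : u ≠ []) (huv : u < v) (z : List β) :
    u ++ v < v ++ z := by
  rcases prefix_or_forall_append_lt_append huv with ⟨d, rfl⟩ | huv
  · have hd : d ≠ [] := by rintro rfl; simp at huv
    simpa using append_left_lt (l₁ := u) (hv.append_lt_suffix_append rfl hu hd [] z)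
  · exact huv v z

theorem append (hu : IsLyndon u) (hv : IsLyndon v) (huv : u < v) : IsLyndon (u ++ v) := by
  refine ⟨by simp [hu.1], fun p q hp hq hpq => ?_⟩
  rcases append_eq_append_iff.1 hpq with ⟨a, rfl, rfl⟩ | ⟨b, rfl, rfl⟩
  · rcases eq_or_ne a [] with rfl | ha
    · simpa using hv.append_lt_append_of_lt hu.1 huv u
    · calc u ++ (a ++ q) < (a ++ q) ++ (u ++ a) := hv.append_lt_append_of_lt hu.1 huv _
        _ < q ++ (u ++ a) := hv.append_lt_suffix_append rfl ha hq _ _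
  · rcases eq_or_ne b [] with rfl | hb
    · simpa using hv.append_lt_append_of_lt hu.1 huv p
    · simpa using hu.append_lt_suffix_append rfl hp hb v (v ++ p)

end IsLyndon

end Lyndon

section Factorization

variable {β : Type*} [LinearOrder β] {u u' t d : List β}

def IsLyndonFactorization (l : List (List β)) : Prop :=
  (∀ u ∈ l, IsLyndon u) ∧ l.IsChain (· ≥ ·)

theorem IsLyndonFactorization.of_cons {l : List (List β)}
    (hl : IsLyndonFactorization (u :: l)) : IsLyndonFactorization l :=
  ⟨fun x hx => hl.1 x (mem_cons_of_mem u hx), hl.2.tail⟩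

theorem IsLyndonFactorization.le_head {l : List (List β)}
    (hl : IsLyndonFactorization (u :: l)) : ∀ x ∈ l, x ≤ u :=
  (pairwise_cons.1 (isChain_iff_pairwise.1 hl.2)).1

theorem IsLyndonFactorization.exists_flatten_eq_append (hu : IsLyndon u) {l : List (List β)}
    (hl : IsLyndonFactorization l) :
    ∃ m, IsLyndonFactorization m ∧ m.flatten = u ++ l.flatten := by
  induction l generalizing u with
  | nil => exact ⟨[u], ⟨by simpa using hu, isChain_singleton u⟩, by simp⟩
  | cons v l ih =>
    by_cases huv : u < v
    · obtain ⟨m, hm, hflat⟩ := ih (hu.append (hl.1 v mem_cons_self) huv) hl.of_cons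
      exact ⟨m, hm, by simp [hflat]⟩
    · exact ⟨u :: v :: l, ⟨forall_mem_cons.2 ⟨hu, hl.1⟩, hl.2.cons_cons (not_lt.1 huv)⟩, rfl⟩

theorem exists_isLyndonFactorization (c : List β) :
    ∃ l, IsLyndonFactorization l ∧ l.flatten = c := by
  induction c with
  | nil => exact ⟨[], ⟨by simp, isChain_nil⟩, rfl⟩
  | cons a c ih =>
    obtain ⟨l, hl, rfl⟩ := ih
    exact hl.exists_flatten_eq_append (isLyndon_singleton a)

theorem IsLyndon.not_prefix_flatten (hu : IsLyndon u) (h : u = t ++ d) (ht : t ≠ [])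
    (hd : d ≠ []) {l : List (List β)} (hl : ∀ x ∈ l, x < u) : ¬ d <+: l.flatten := by
  induction l generalizing t d with
  | nil => exact fun hdl => hd (prefix_nil.1 hdl)
  | cons x l ih =>
    intro hdl
    rw [flatten_cons] at hdl
    rcases le_or_gt d.length x.length with hdx | hxd
    · have hdx : d ≤ x := (prefix_of_prefix_length_le hdl (prefix_append x _) hdx).le'
      exact lt_asymm (hu.lt_of_suffix h ht hd) (hdx.trans_lt (hl x mem_cons_self))
    · obtain ⟨e, rfl⟩ := prefix_of_prefix_length_le (prefix_append x _) hdl hxd.le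
      have he : e ≠ [] := by rintro rfl; simp at hxd
      exact ih (t := t ++ x) (by simp [h]) (by simp [ht]) he
        (fun y hy => hl y (mem_cons_of_mem x hy)) ((prefix_append_right_inj x).1 hdl)

theorem IsLyndon.length_le_of_prefix (hu : IsLyndon u) (hu' : u' ≠ []) {l : List (List β)}
    (hl : ∀ x ∈ l, x ≤ u') (hpre : u <+: u' ++ l.flatten) : u.length ≤ u'.length := by
  by_contra! hlen
  obtain ⟨d, rfl⟩ := prefix_of_prefix_length_le (prefix_append u' _) hpre hlen.le
  have hd : d ≠ [] := by rintro rfl; simp at hlen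
  exact hu.not_prefix_flatten rfl hu' hd
    (fun x hx => (hl x hx).trans_lt (lt_append_of_ne_nil hd))
    ((prefix_append_right_inj u').1 hpre)

theorem IsLyndonFactorization.eq_of_flatten_eq {l l' : List (List β)}
    (hl : IsLyndonFactorization l) (hl' : IsLyndonFactorization l')
    (h : l.flatten = l'.flatten) : l = l' := by
  induction l generalizing l' with
  | nil =>
    cases l' with
    | nil => rfl
    | cons u' l' =>
      exact absurd (flatten_eq_nil_iff.1 h.symm u' mem_cons_self) (hl'.1 u' mem_cons_self).1
  | cons u l ih =>
    cases l' with
    | nil => simp [(hl.1 u mem_cons_self).1] at h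
    | cons u' l' =>
      rw [flatten_cons, flatten_cons] at h
      have hu := hl.1 u mem_cons_self
      have hu' := hl'.1 u' mem_cons_self
      have hlen : u.length = u'.length := le_antisymm
        (hu.length_le_of_prefix hu'.1 hl'.le_head (h ▸ prefix_append u _))
        (hu'.length_le_of_prefix hu.1 hl.le_head (h ▸ prefix_append u' _))
      obtain ⟨rfl, htail⟩ := append_inj h hlen
      rw [ih hl.of_cons hl'.of_cons htail]

end Factorization

namespace List

variable {δ : Type*} {f g : List (δ × ℕ)}

def expandRuns (f : List (δ × ℕ)) : List δ :=
  f.flatMap fun q => replicate q.2 q.1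

@[simp] theorem expandRuns_nil : expandRuns ([] : List (δ × ℕ)) = [] := rfl

@[simp] theorem expandRuns_cons (q : δ × ℕ) (f : List (δ × ℕ)) :
    expandRuns (q :: f) = replicate q.2 q.1 ++ expandRuns f := rfl

theorem mem_expandRuns {y : δ} : y ∈ expandRuns f ↔ ∃ q ∈ f, q.2 ≠ 0 ∧ y = q.1 := by
  simp [expandRuns]

theorem flatten_expandRuns (f : List (List δ × ℕ)) :
    (expandRuns f).flatten = (f.map fun q => (replicate q.2 q.1).flatten).flatten := by
  induction f with
  | nil => rfl
  | cons q f ih => simp [ih]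

theorem head?_expandRuns (hf : ∀ q ∈ f, 1 ≤ q.2) :
    (expandRuns f).head? = f.head?.map Prod.fst := by
  rcases f with _ | ⟨⟨u, _ | n⟩, f⟩
  · rfl
  · simp at hf
  · simp [replicate_succ]

theorem exists_expandRuns_eq {R : δ → δ → Prop} {l : List δ} (hl : l.IsChain R) :
    ∃ f : List (δ × ℕ), (∀ q ∈ f, 1 ≤ q.2) ∧
      f.IsChain (fun p q => R p.1 q.1 ∧ p.1 ≠ q.1) ∧ expandRuns f = l := by
  induction l with
  | nil => exact ⟨[], by simp, isChain_nil, rfl⟩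
  | cons x l ih =>
    obtain ⟨f, hf, hfc, rfl⟩ := ih hl.tail
    rcases f with _ | ⟨⟨y, n⟩, f⟩
    · exact ⟨[(x, 1)], by simp, isChain_singleton _, rfl⟩
    by_cases hxy : x = y
    · subst hxy
      refine ⟨(x, n + 1) :: f, ?_, isChain_cons.2 (isChain_cons.1 hfc), by simp [replicate_succ]⟩
      exact forall_mem_cons.2 ⟨by omega, (forall_mem_cons.1 hf).2⟩
    · have hhead : (expandRuns ((y, n) :: f)).head? = some y := by
        rw [head?_expandRuns hf]; rfl
      have hR : R x y := hl.rel_head? hhead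
      exact ⟨(x, 1) :: (y, n) :: f, forall_mem_cons.2 ⟨le_rfl, hf⟩, hfc.cons_cons ⟨hR, hxy⟩, rfl⟩

theorem isChain_expandRuns {R : δ → δ → Prop} (hR : ∀ a, R a a) (hf : ∀ q ∈ f, 1 ≤ q.2)
    (hc : f.IsChain fun p q => R p.1 q.1) : (expandRuns f).IsChain R := by
  induction f with
  | nil => exact isChain_nil
  | cons q f ih =>
    have hf' : ∀ p ∈ f, 1 ≤ p.2 := fun p hp => hf p (mem_cons_of_mem q hp)
    rw [expandRuns_cons]
    refine (isChain_replicate_of_rel q.2 (hR q.1)).append (ih hf' hc.tail) fun x hx y hy => ?_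
    rw [head?_expandRuns hf'] at hy
    rcases f with _ | ⟨p, f⟩
    · simp at hy
    · obtain rfl : p.1 = y := by simpa using hy
      rw [eq_of_mem_replicate (mem_of_getLast? hx)]
      exact (isChain_cons_cons.1 hc).1

theorem replicate_append_inj {u : δ} {m n : ℕ} {A B : List δ} (hA : A.head? ≠ some u)
    (hB : B.head? ≠ some u) (h : replicate m u ++ A = replicate n u ++ B) : m = n ∧ A = B := by
  wlog hmn : m ≤ n generalizing m n A B
  · exact (this hB hA h.symm (by omega)).imp Eq.symm Eq.symm
  obtain ⟨k, rfl⟩ := Nat.exists_eq_add_of_le hmn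
  rw [replicate_add, append_assoc, append_cancel_left_eq] at h
  rcases k with _ | k
  · simpa using h
  · simp [h, replicate_succ] at hA

theorem head?_expandRuns_ne {u : δ} {n : ℕ} (hf : ∀ q ∈ f, 1 ≤ q.2)
    (hc : ((u, n) :: f).IsChain fun p q => p.1 ≠ q.1) : (expandRuns f).head? ≠ some u := by
  rw [head?_expandRuns hf]
  rcases f with _ | ⟨p, f⟩
  · simp
  · simpa [eq_comm] using (isChain_cons_cons.1 hc).1

theorem expandRuns_inj (hf : ∀ q ∈ f, 1 ≤ q.2) (hfc : f.IsChain fun p q => p.1 ≠ q.1)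
    (hg : ∀ q ∈ g, 1 ≤ q.2) (hgc : g.IsChain fun p q => p.1 ≠ q.1)
    (h : expandRuns f = expandRuns g) : f = g := by
  induction f generalizing g with
  | nil => simpa [head?_expandRuns hg] using (congrArg head? h).symm
  | cons q f ih =>
    have hhead := congrArg head? h
    rw [head?_expandRuns hf, head?_expandRuns hg] at hhead
    rcases g with _ | ⟨q', g⟩
    · simp at hhead
    obtain ⟨u, n⟩ := q
    obtain ⟨u', n'⟩ := q'
    obtain rfl : u = u' := by simpa using hhead
    have hf' : ∀ q ∈ f, 1 ≤ q.2 := fun q hq => hf q (mem_cons_of_mem _ hq)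
    have hg' : ∀ q ∈ g, 1 ≤ q.2 := fun q hq => hg q (mem_cons_of_mem _ hq)
    obtain ⟨rfl, htail⟩ := replicate_append_inj (head?_expandRuns_ne hf' hfc)
      (head?_expandRuns_ne hg' hgc) h
    rw [ih hf' hfc.tail hg' hgc.tail htail]

end List

theorem existsUnique_lyndon_factorization {β : Type*} [LinearOrder β] (c : List β) :
    ∃! f : List (List β × ℕ), (∀ q ∈ f, IsLyndon q.1 ∧ 1 ≤ q.2) ∧
      f.IsChain (fun p q => q.1 < p.1) ∧
      c = (f.map fun q => (replicate q.2 q.1).flatten).flatten := by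
  obtain ⟨l, hl, rfl⟩ := exists_isLyndonFactorization c
  obtain ⟨f, hf, hfc, rfl⟩ := exists_expandRuns_eq hl.2
  refine ⟨f, ⟨fun q hq => ⟨?_, hf q hq⟩, hfc.imp fun _ _ h => lt_of_le_of_ne h.1 h.2.symm,
    flatten_expandRuns f⟩, fun g ⟨hg, hgc, hflat⟩ => ?_⟩
  · exact hl.1 q.1 (mem_expandRuns.2 ⟨q, hq, Nat.one_le_iff_ne_zero.1 (hf q hq), rfl⟩)
  have hg' : IsLyndonFactorization (expandRuns g) := by
    refine ⟨fun u hu => ?_, isChain_expandRuns le_refl (fun q hq => (hg q hq).2)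
      (hgc.imp fun _ _ h => h.le)⟩
    obtain ⟨q, hq, -, rfl⟩ := mem_expandRuns.1 hu
    exact (hg q hq).1
  refine expandRuns_inj (fun q hq => (hg q hq).2) (hgc.imp fun _ _ h => h.ne')
    hf (hfc.imp fun _ _ h => h.2) (hg'.eq_of_flatten_eq hl ?_)
  rw [flatten_expandRuns, ← hflat, flatten_expandRuns]

theorem wordLt_iff {α : Type*} [LinearOrder α] (u v : List α) :
    wordLt u v ↔ @LT.lt (List αᵒᵈ) _ v u := by
  refine .trans ?_ (lt_iff_prefix_or_exists (β := αᵒᵈ)).symm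
  refine or_congr Iff.rfl ⟨?_, ?_⟩ <;>
    exact fun ⟨w, a, b, x, y, h₁, h₂, h⟩ => ⟨w, b, a, y, x, h₂, h₁, h⟩

theorem isStandard_iff {α : Type*} [LinearOrder α] (u : List α) :
    IsStandard u ↔ IsLyndon (β := αᵒᵈ) u :=
  and_congr_right' <| forall₂_congr fun v w => imp_congr_right fun _ =>
    imp_congr_right fun _ => imp_congr_right fun h => by subst h; exact wordLt_iff _ _

/-- Lyndon's theorem: every word `c` has a unique representation
`c = u₁^{n₁} u₂^{n₂} ⋯ u_k^{n_k}` where `u₁ < u₂ < ⋯ < u_k` are standard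
words and each `nᵢ ≥ 1`. -/
theorem stmt_6 {α : Type*} [LinearOrder α] (c : List α) :
    ∃! f : List (List α × ℕ),
      (∀ q ∈ f, IsStandard q.1 ∧ 1 ≤ q.2) ∧
      f.Chain' (fun q r => wordLt q.1 r.1) ∧
      c = (f.map (fun q => (List.replicate q.2 q.1).flatten)).flatten := by
  simp only [isStandard_iff, wordLt_iff]
  exact existsUnique_lyndon_factorization (β := αᵒᵈ) c
end

section
/- Let u_{km} = x_k x_{k+1} ⋯ x_m (1 ≤ k ≤ m ≤ n) over the alphabet x₁ > x₂ > … > xₙ. The nonassociative word [[u_{km}][u_{rs}]] is a standard nonassociative word only in the following cases: (1) k = m ≤ r; (2) r = k+1 and m ≥ s; (3) r = k and m < s. -/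
/-- Letters are natural numbers with the order `x_k > x_{k+1} > …`.  Word
order: `u < v` iff `v` is a proper prefix of `u`, or at the first differing
position the letter of `u` is smaller (i.e. its index is bigger). -/
def wltN (u v : List ℕ) : Prop :=
  (v <+: u ∧ v ≠ u) ∨
    ∃ (w : List ℕ) (a b : ℕ) (u' v' : List ℕ),
      u = w ++ a :: u' ∧ v = w ++ b :: v' ∧ b < a

/-- A nonempty word is standard (Lyndon) if `vw > wv` for every factorization
into nonempty words. -/
def StdWordN (u : List ℕ) : Prop :=
  u ≠ [] ∧ ∀ v w : List ℕ, v ≠ [] → w ≠ [] → u = v ++ w → wltN (w ++ v) (v ++ w)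

/-- The underlying (associative) word of a nonassociative word. -/
def flat : FreeMagma ℕ → List ℕ
  | FreeMagma.of a => [a]
  | FreeMagma.mul x y => flat x ++ flat y

/-- Standard nonassociative words. -/
inductive StdNA : FreeMagma ℕ → Prop
  | of (a : ℕ) : StdNA (FreeMagma.of a)
  | mul (x y : FreeMagma ℕ) : StdNA x → StdNA y →
      StdWordN (flat x) → StdWordN (flat y) →
      wltN (flat y) (flat x) →
      (∀ x₁ x₂ : FreeMagma ℕ, x = FreeMagma.mul x₁ x₂ → ¬ wltN (flat y) (flat x₂)) →
      StdNA (FreeMagma.mul x y)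

/-- The left-normed bracketing `[x_K [x_{K+1} [… x_{K+f}]…]]`; this is the
standard bracketing `[u_{km}]` of `u_{km} = x_k ⋯ x_m` when `f = m - k`. -/
def leftNorm : ℕ → ℕ → FreeMagma ℕ
  | K, 0 => FreeMagma.of K
  | K, f + 1 => FreeMagma.mul (FreeMagma.of K) (leftNorm (K + 1) f)

/-!
The underlying word of `[u_{km}]` is the interval `x_k ⋯ x_m`. Two intervals compare by their
first letters, and when these agree the shorter one is a proper prefix of the longer, hence the
larger word. So the condition `u_{rs} < u_{km}` forces `k < r`, or `k = r` and `m < s`. If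
`k < r` and `k < m`, then `[u_{km}] = [x_k [u_{k+1,m}]]`, and the condition `u_{rs} ≥ u_{k+1,m}`
forces `r = k + 1` and `s ≤ m`.
-/

theorem flat_leftNorm (K f : ℕ) : flat (leftNorm K f) = List.range' K (f + 1) := by
  induction f generalizing K with
  | zero => rfl
  | succ f ih => simp [leftNorm, flat, ih, List.range'_succ]

theorem range'_eq_append_cons {s n a : ℕ} {w u : List ℕ} (h : List.range' s n = w ++ a :: u) :
    a = s + w.length := by
  obtain ⟨j, -, rfl, hcons⟩ := List.range'_eq_append_iff.mp h
  simpa using (List.range'_eq_cons_iff.mp hcons.symm).1.symm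

theorem wltN_range'_iff {k r a b : ℕ} :
    wltN (List.range' r (b + 1)) (List.range' k (a + 1)) ↔ k < r ∨ k = r ∧ a < b := by
  constructor
  · rintro (⟨⟨t, ht⟩, hne⟩ | ⟨w, x, y, u, v, hu, hv, hyx⟩)
    · obtain ⟨j, hj, hpre, -⟩ := List.range'_eq_append_iff.mp ht.symm
      obtain ⟨rfl, rfl⟩ : a + 1 = j ∧ k = r := by simpa using hpre
      have hab : a ≠ b := by rintro rfl; exact hne rfl
      omega
    · have hx := range'_eq_append_cons hu
      have hy := range'_eq_append_cons hv
      omega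
  · rintro (hkr | ⟨rfl, hab⟩)
    · exact Or.inr ⟨[], r, k, _, _, List.range'_succ, List.range'_succ, hkr⟩
    · refine Or.inl ⟨⟨List.range' (k + (a + 1)) (b - a), ?_⟩, ?_⟩
      · rw [List.range'_append_1]
        congr 1
        omega
      · simp only [ne_eq, List.range'_inj]
        omega

theorem stmt_9_general (k m r s : ℕ) (hkm : k ≤ m)
    (h : StdNA (FreeMagma.mul (leftNorm k (m - k)) (leftNorm r (s - r)))) :
    (k = m ∧ m ≤ r) ∨ (r = k + 1 ∧ s ≤ m) ∨ (r = k ∧ m < s) := by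
  obtain _ | ⟨_, _, _, _, _, _, hlt, hright⟩ := h
  rw [flat_leftNorm, flat_leftNorm, wltN_range'_iff] at hlt
  rcases hlt with hkr | ⟨rfl, hms⟩
  · obtain rfl | hkm_lt := hkm.eq_or_lt
    · exact Or.inl ⟨rfl, hkr.le⟩
    · obtain ⟨f, hf⟩ : ∃ f, m - k = f + 1 := ⟨m - k - 1, by omega⟩
      have hge := hright _ _ (by rw [hf]; rfl)
      rw [flat_leftNorm, flat_leftNorm, wltN_range'_iff] at hge
      omega
  · exact Or.inr (Or.inr ⟨rfl, by omega⟩)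

/-- The nonassociative word `[[u_{km}][u_{rs}]]` is standard only if
`k = m ≤ r`, or `r = k+1` and `m ≥ s`, or `r = k` and `m < s`. -/
theorem stmt_9 (k m r s : ℕ) (hkm : k ≤ m) (hrs : r ≤ s)
    (h : StdNA (FreeMagma.mul (leftNorm k (m - k)) (leftNorm r (s - r)))) :
    (k = m ∧ m ≤ r) ∨ (r = k + 1 ∧ s ≤ m) ∨ (r = k ∧ m < s) :=
  stmt_9_general k m r s hkm h
end

section
/- In the quantum enveloping algebra of type Aₙ with p₁₁ ≠ −1, with relations x_i x_j = p_{ij} x_j x_i for |i−j| > 1, x_i x_{i+1}² = p_{i,i+1}(1+p_{i+1,i+1}) x_{i+1} x_i x_{i+1} − p_{i,i+1}² p_{i+1,i+1} x_{i+1}² x_i, and x_i² x_{i+1} = p_{i,i+1}(1+p_{ii}) x_i x_{i+1} x_i − p_{i,i+1}² p_{ii} x_{i+1} x_i², the congruence u_{km} y ≡_{k+1} 0 holds for y = x_i with i > k, i ≠ m+1, and for y = x_i² with i = m+1 > k, where u_{km} = x_k x_{k+1} ⋯ x_m and ≡_{k+1} denotes equality modulo the span of words beginning with some x_j, j ≥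 k+1. -/
/-- In (any algebra satisfying the relations of) the quantum enveloping
algebra of type `Aₙ` with `p₁₁ ≠ -1`, for `1 ≤ K ≤ m ≤ n` one has
`u_{Km}·y ≡_{K+1} 0` for `y = x_i` with `K < i ≤ n`, `i ≠ m+1`, and for
`y = x_{m+1}²` (when `m+1 ≤ n`); here `u_{Km} = x_K x_{K+1} ⋯ x_m` and
`≡_{K+1}` is equality modulo the span of words beginning with a letter
`x_j`, `K+1 ≤ j ≤ n`. -/
theorem stmt_10 {k : Type*} [Field k] {A : Type*} [Ring A] [Algebra k A]
    (n : ℕ) (x : ℕ → A) (p : ℕ → ℕ → kˣ)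
    (hne : ((p 1 1 : kˣ) : k) ≠ -1)
    (hdiag : ∀ i, 1 ≤ i → i ≤ n → p i i = p 1 1)
    (hadj : ∀ i, 1 ≤ i → i + 1 ≤ n → p i (i + 1) * p (i + 1) i = (p 1 1)⁻¹)
    (hdist : ∀ i j, 1 ≤ j → j + 1 < i → i ≤ n → p i j * p j i = 1)
    (hcomm : ∀ i j, 1 ≤ j → j + 1 < i → i ≤ n →
      x i * x j = ((p i j : kˣ) : k) • (x j * x i))
    (hserre1 : ∀ i, 1 ≤ i → i + 1 ≤ n →
      x i * x (i + 1) ^ 2 =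
        (((p i (i + 1) : kˣ) : k) * (1 + ((p (i + 1) (i + 1) : kˣ) : k))) •
            (x (i + 1) * x i * x (i + 1))
          - (((p i (i + 1) : kˣ) : k) ^ 2 * ((p (i + 1) (i + 1) : kˣ) : k)) •
            (x (i + 1) ^ 2 * x i))
    (hserre2 : ∀ i, 1 ≤ i → i + 1 ≤ n →
      x i ^ 2 * x (i + 1) =
        (((p i (i + 1) : kˣ) : k) * (1 + ((p i i : kˣ) : k))) •
            (x i * x (i + 1) * x i)
          - (((p i (i + 1) : kˣ) : k) ^ 2 * ((p i i : kˣ) : k)) •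
            (x (i + 1) * x i ^ 2))
    (K m : ℕ) (hK : 1 ≤ K) (hKm : K ≤ m) (hm : m ≤ n) :
    (∀ i, K < i → i ≤ n → i ≠ m + 1 →
      ((List.range' K (m + 1 - K)).map x).prod * x i ∈
        Submodule.span k {a : A | ∃ j, K + 1 ≤ j ∧ j ≤ n ∧
          ∃ l : List ℕ, (∀ t ∈ l, 1 ≤ t ∧ t ≤ n) ∧ a = x j * (l.map x).prod}) ∧
    (m + 1 ≤ n →
      ((List.range' K (m + 1 - K)).map x).prod * x (m + 1) ^ 2 ∈
        Submodule.span k {a : A | ∃ j, K + 1 ≤ j ∧ j ≤ n ∧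
          ∃ l : List ℕ, (∀ t ∈ l, 1 ≤ t ∧ t ≤ n) ∧ a = x j * (l.map x).prod}) := by
  classical
  set S : Submodule k A := Submodule.span k {a : A | ∃ j, K + 1 ≤ j ∧ j ≤ n ∧
      ∃ l : List ℕ, (∀ t ∈ l, 1 ≤ t ∧ t ≤ n) ∧ a = x j * (l.map x).prod} with hSdef
  -- generators
  have hgen : ∀ j, K + 1 ≤ j → j ≤ n → ∀ l : List ℕ,
      (∀ t ∈ l, 1 ≤ t ∧ t ≤ n) → x j * (l.map x).prod ∈ S := by
    intro j hj1 hj2 l hl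
    exact Submodule.subset_span ⟨j, hj1, hj2, l, hl, rfl⟩
  -- S is stable under right multiplication by admissible letters
  have hmul : ∀ t, 1 ≤ t → t ≤ n → ∀ a ∈ S, a * x t ∈ S := by
    intro t ht1 ht2 a ha
    have hmap : S.map (LinearMap.mulRight k (x t)) ≤ S := by
      rw [hSdef, Submodule.map_span, Submodule.span_le]
      rintro _ ⟨b, ⟨j, hj1, hj2, l, hl, rfl⟩, rfl⟩
      have he : (LinearMap.mulRight k (x t)) (x j * (l.map x).prod)
          = x j * ((l ++ [t]).map x).prod := by
        simp [LinearMap.mulRight_apply, List.prod_append, mul_assoc]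
      rw [he]
      exact hgen j hj1 hj2 (l ++ [t]) (by
        intro s hs
        rcases List.mem_append.1 hs with h | h
        · exact hl s h
        · simp only [List.mem_singleton] at h
          subst h; exact ⟨ht1, ht2⟩)
    exact hmap (Submodule.mem_map_of_mem ha)
  -- inverted commutation
  have hcomm' : ∀ i j, 1 ≤ j → j + 1 < i → i ≤ n →
      x j * x i = (((p i j)⁻¹ : kˣ) : k) • (x i * x j) := by
    intro i j h1 h2 h3
    rw [hcomm i j h1 h2 h3, smul_smul, ← Units.val_mul, inv_mul_cancel,
      Units.val_one, one_smul]
  -- product decomposition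
  have hu : ∀ a, K ≤ a →
      ((List.range' K (a + 1 + 1 - K)).map x).prod
        = ((List.range' K (a + 1 - K)).map x).prod * x (a + 1) := by
    intro a ha
    have h1 : a + 1 + 1 - K = (a + 1 - K) + 1 := by omega
    have h2 : K + 1 * (a + 1 - K) = a + 1 := by omega
    rw [h1, List.range'_concat, h2, List.map_append, List.prod_append,
      List.map_singleton, List.prod_singleton]
  have huK : ((List.range' K (K + 1 - K)).map x).prod = x K := by
    have h1 : K + 1 - K = 1 := by omega
    rw [h1]; simp
  have key : ∀ M, K ≤ M → M ≤ n →
      (∀ i, K < i → i ≤ n → i ≠ M + 1 →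
        ((List.range' K (M + 1 - K)).map x).prod * x i ∈ S) ∧
      (M + 1 ≤ n →
        ((List.range' K (M + 1 - K)).map x).prod * x (M + 1) ^ 2 ∈ S) := by
    intro M
    induction M using Nat.strong_induction_on with
    | _ M ih =>
    intro hKM hMn
    constructor
    · intro i hi1 hi2 hi3
      rcases eq_or_lt_of_le hKM with rfl | hMK
      · -- M = K, so i ≥ K + 2
        rw [huK, hcomm' i K hK (by omega) hi2]
        refine S.smul_mem _ ?_
        have he : x i * x K = x i * (([K]).map x).prod := by simp
        rw [he]
        exact hgen i (by omega) hi2 [K] (by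
          intro t ht; simp only [List.mem_singleton] at ht; subst ht
          exact ⟨hK, by omega⟩)
      · obtain ⟨a, rfl⟩ : ∃ a, M = a + 1 := ⟨M - 1, by omega⟩
        have hKa : K ≤ a := by omega
        rw [hu a hKa]
        by_cases hiM : i = a + 1
        · subst hiM
          rw [mul_assoc, ← sq]
          exact (ih a (by omega) hKa (by omega)).2 (by omega)
        · by_cases hlt : i < a + 1
          · by_cases hia : i = a
            · -- hard case: i = a, need a = b + 1
              subst hia
              obtain ⟨b, rfl⟩ : ∃ b, i = b + 1 := ⟨i - 1, by omega⟩
              rw [hu b (by omega)]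
              -- goal : u b * x (b+1) * x (b+2) * x (b+1) ∈ S
              set q : k := ((p (b + 1) (b + 1 + 1) : kˣ) : k) with hq
              set r : k := ((p 1 1 : kˣ) : k) with hrr
              have hr : ((p (b + 1) (b + 1) : kˣ) : k) = r := by
                rw [hrr, hdiag (b + 1) (by omega) (by omega)]
              set c : k := q * (1 + r) with hc
              have hcne : c ≠ 0 := by
                rw [hc]
                refine mul_ne_zero (Units.ne_zero _) ?_
                intro h
                exact hne (by linear_combination h)
              have h1 : c • (x (b + 1) * x (b + 1 + 1) * x (b + 1))
                  = x (b + 1) ^ 2 * x (b + 1 + 1)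
                    + (q ^ 2 * r) • (x (b + 1 + 1) * x (b + 1) ^ 2) := by
                rw [hserre2 (b + 1) (by omega) (by omega), hr]
                abel
              have hM' : x (b + 1) * x (b + 1 + 1) * x (b + 1)
                  = c⁻¹ • (x (b + 1) ^ 2 * x (b + 1 + 1)
                    + (q ^ 2 * r) • (x (b + 1 + 1) * x (b + 1) ^ 2)) := by
                rw [← h1, inv_smul_smul₀ hcne]
              have hassoc : ((List.range' K (b + 1 - K)).map x).prod * x (b + 1)
                    * x (b + 1 + 1) * x (b + 1)
                  = ((List.range' K (b + 1 - K)).map x).prod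
                    * (x (b + 1) * x (b + 1 + 1) * x (b + 1)) := by
                simp [mul_assoc]
              rw [hassoc, hM', mul_smul_comm, mul_add, mul_smul_comm]
              refine S.smul_mem _ (S.add_mem ?_ (S.smul_mem _ ?_))
              · have he : ((List.range' K (b + 1 - K)).map x).prod
                    * (x (b + 1) ^ 2 * x (b + 1 + 1))
                    = ((List.range' K (b + 1 - K)).map x).prod
                      * x (b + 1) ^ 2 * x (b + 1 + 1) := by
                  rw [mul_assoc]
                rw [he]
                refine hmul (b + 1 + 1) (by omega) (by omega) _ ?_
                have hb' : b + 1 - K = b + 1 - K := rfl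
                have hbK : K ≤ b := by omega
                have := (ih b (by omega) hbK (by omega)).2 (by omega)
                convert this using 3 <;> omega
              · have he : ((List.range' K (b + 1 - K)).map x).prod
                    * (x (b + 1 + 1) * x (b + 1) ^ 2)
                    = ((List.range' K (b + 1 - K)).map x).prod
                      * x (b + 1 + 1) * x (b + 1) * x (b + 1) := by
                  rw [sq]; simp [mul_assoc]
                rw [he]
                refine hmul (b + 1) (by omega) (by omega) _ ?_
                refine hmul (b + 1) (by omega) (by omega) _ ?_
                have hbK : K ≤ b := by omega
                have := (ih b (by omega) hbK (by omega)).1 (b + 1 + 1)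
                  (by omega) (by omega) (by omega)
                convert this using 3 <;> omega
            · -- K < i ≤ a - 1
              rw [mul_assoc, hcomm (a + 1) i (by omega) (by omega) (by omega),
                mul_smul_comm, ← mul_assoc]
              refine S.smul_mem _ ?_
              refine hmul (a + 1) (by omega) (by omega) _ ?_
              exact (ih a (by omega) hKa (by omega)).1 i hi1 hi2 (by omega)
          · -- i ≥ a + 3
            rw [mul_assoc, hcomm' i (a + 1) (by omega) (by omega) hi2,
              mul_smul_comm, ← mul_assoc]
            refine S.smul_mem _ ?_
            refine hmul (a + 1) (by omega) (by omega) _ ?_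
            exact (ih a (by omega) hKa (by omega)).1 i (by omega) hi2 (by omega)
    · intro hM1n
      rcases eq_or_lt_of_le hKM with rfl | hMK
      · rw [huK, hserre1 K hK (by omega)]
        refine S.sub_mem (S.smul_mem _ ?_) (S.smul_mem _ ?_)
        · have he : x (K + 1) * x K * x (K + 1)
              = x (K + 1) * (([K, K + 1]).map x).prod := by
            simp [mul_assoc]
          rw [he]
          exact hgen (K + 1) le_rfl (by omega) [K, K + 1] (by
            intro t ht
            simp only [List.mem_cons, List.mem_singleton, List.not_mem_nil, or_false] at ht
            rcases ht with rfl | rfl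
            · exact ⟨hK, by omega⟩
            · exact ⟨by omega, by omega⟩)
        · have he : x (K + 1) ^ 2 * x K
              = x (K + 1) * (([K + 1, K]).map x).prod := by
            simp [sq, mul_assoc]
          rw [he]
          exact hgen (K + 1) le_rfl (by omega) [K + 1, K] (by
            intro t ht
            simp only [List.mem_cons, List.mem_singleton, List.not_mem_nil, or_false] at ht
            rcases ht with rfl | rfl
            · exact ⟨by omega, by omega⟩
            · exact ⟨hK, by omega⟩)
      · obtain ⟨a, rfl⟩ : ∃ a, M = a + 1 := ⟨M - 1, by omega⟩
        have hKa : K ≤ a := by omega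
        rw [hu a hKa, mul_assoc, hserre1 (a + 1) (by omega) hM1n,
          mul_sub, mul_smul_comm, mul_smul_comm]
        refine S.sub_mem (S.smul_mem _ ?_) (S.smul_mem _ ?_)
        · have he : ((List.range' K (a + 1 - K)).map x).prod
              * (x (a + 1 + 1) * x (a + 1) * x (a + 1 + 1))
              = ((List.range' K (a + 1 - K)).map x).prod
                * x (a + 1 + 1) * x (a + 1) * x (a + 1 + 1) := by
            simp [mul_assoc]
          rw [he]
          refine hmul (a + 1 + 1) (by omega) (by omega) _ ?_
          refine hmul (a + 1) (by omega) (by omega) _ ?_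
          exact (ih a (by omega) hKa (by omega)).1 (a + 1 + 1)
            (by omega) (by omega) (by omega)
        · have he : ((List.range' K (a + 1 - K)).map x).prod
              * (x (a + 1 + 1) ^ 2 * x (a + 1))
              = ((List.range' K (a + 1 - K)).map x).prod
                * x (a + 1 + 1) * x (a + 1 + 1) * x (a + 1) := by
            simp [sq, mul_assoc]
          rw [he]
          refine hmul (a + 1) (by omega) (by omega) _ ?_
          refine hmul (a + 1 + 1) (by omega) (by omega) _ ?_
          exact (ih a (by omega) hKa (by omega)).1 (a + 1 + 1)
            (by omega) (by omega) (by omega)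
  exact ⟨(key m hKm hm).1, (key m hKm hm).2⟩
end

section
/- In the quantum enveloping algebra of type Aₙ (p₁₁ ≠ −1), for 1 ≤ k ≤ m < n the relation u_{km} u_{k,m+1} ≡_{k+1} γ u_{k,m+1} u_{km} holds for some nonzero scalar γ, where u_{km} = x_k ⋯ x_m. -/
/-!
Write `u_{Km} = x_K W` and `u_{K,m+1} = x_K W'` with `W = u_{K+1,m}` and `W' = u_{K+1,m+1}`.
In `u_{Km} u_{K,m+1}` the second `x_K` moves left past `x_{K+2} ⋯ x_m` (each letter
skew-commutes with it), and the Serre relation, solved for the middle term as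
`x_K x_{K+1} x_K ∈ k^× x_K² x_{K+1} + k x_{K+1} x_K²` (this is where `p₁₁ ≠ -1` enters), gives
`u_{Km} u_{K,m+1} ≡_{K+1} α x_K² W W'`; likewise `u_{K,m+1} u_{Km} ≡_{K+1} β x_K² W' W`, with
`α, β ≠ 0`. By induction on `m - K`, `W W' ≡_{K+2} γ' W' W`, and left multiplication by `x_K`
preserves `≡_{K+2}` because `x_K` skew-commutes with every `x_j`, `j ≥ K + 2`.
Hence `γ = α γ' / β` works.
-/

open Submodule

section

variable {k A : Type*} [Field k] [Ring A] [Algebra k A]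

variable (k) in
def SkewCommute (a b : A) : Prop :=
  ∃ c : k, c ≠ 0 ∧ a * b = c • (b * a)

namespace SkewCommute

variable {a b : A}

theorem symm (h : SkewCommute k a b) : SkewCommute k b a := by
  obtain ⟨c, hc, h⟩ := h
  exact ⟨c⁻¹, inv_ne_zero hc, by rw [h, smul_smul, inv_mul_cancel₀ hc, one_smul]⟩

theorem list_prod_left {l : List A} (h : ∀ b ∈ l, SkewCommute k b a) :
    SkewCommute k l.prod a := by
  induction l with
  | nil => exact ⟨1, one_ne_zero, by simp⟩
  | cons b l ih =>
    obtain ⟨c, hc, hb⟩ := h b List.mem_cons_self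
    obtain ⟨d, hd, hl⟩ := ih fun b' hb' => h b' (List.mem_cons_of_mem _ hb')
    refine ⟨d * c, mul_ne_zero hd hc, ?_⟩
    rw [List.prod_cons, mul_assoc, hl, mul_smul_comm, ← mul_assoc, hb, smul_mul_assoc,
      smul_smul, mul_assoc]

end SkewCommute

/-- The paper's `u_{ab} = x_a x_{a+1} ⋯ x_b`; it is `1` when `b < a`. -/
def intervalProd (x : ℕ → A) (a b : ℕ) : A :=
  ((List.range' a (b + 1 - a)).map x).prod

theorem intervalProd_eq_mul (x : ℕ → A) {a b : ℕ} (h : a ≤ b) :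
    intervalProd x a b = x a * intervalProd x (a + 1) b := by
  rw [intervalProd, intervalProd, show b + 1 - a = b + 1 - (a + 1) + 1 by omega,
    List.range'_succ, List.map_cons, List.prod_cons]

theorem intervalProd_succ_self (x : ℕ → A) (a : ℕ) : intervalProd x (a + 1) a = 1 := by
  simp [intervalProd]

theorem SkewCommute.intervalProd_left {x : ℕ → A} {y : A} {a b : ℕ}
    (h : ∀ t, a ≤ t → t ≤ b → SkewCommute k (x t) y) :
    SkewCommute k (intervalProd x a b) y :=
  SkewCommute.list_prod_left <| List.forall_mem_map.2 fun t ht => by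
    rw [List.mem_range'_1] at ht
    exact h t ht.1 (by omega)

theorem sub_mul_div_smul_mem {M : Submodule k A} {a b c d : A} {α β γ : k} (hβ : β ≠ 0)
    (ha : a - α • c ∈ M) (hb : b - β • d ∈ M) (hcd : c - γ • d ∈ M) :
    a - (α * γ / β) • b ∈ M := by
  have h : a - (α * γ / β) • b = (a - α • c) + α • (c - γ • d) - (α * γ / β) • (b - β • d) := by
    rw [smul_sub, smul_sub, smul_smul, smul_smul, div_mul_cancel₀ _ hβ]
    abel
  rw [h]
  exact sub_mem (add_mem ha (smul_mem _ _ hcd)) (smul_mem _ _ hb)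

theorem exists_mul_mul_eq_of_sq_mul_eq {a b : A} {γ δ : k} (hγ : γ ≠ 0)
    (h : a ^ 2 * b = γ • (a * b * a) - δ • (b * a ^ 2)) :
    ∃ α β : k, α ≠ 0 ∧ a * b * a = α • (a ^ 2 * b) + β • (b * a ^ 2) := by
  refine ⟨γ⁻¹, γ⁻¹ * δ, inv_ne_zero hγ, ?_⟩
  rw [h, smul_sub, smul_smul, smul_smul, inv_mul_cancel₀ hγ, one_smul]
  abel

section Words

def IsWord (n : ℕ) (x : ℕ → A) (w : A) : Prop :=
  ∃ l : List ℕ, (∀ t ∈ l, 1 ≤ t ∧ t ≤ n) ∧ w = (l.map x).prod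

/-- The paper's `a ≡_r b` means `a - b ∈ span k (wordsFrom n x r)`. -/
def wordsFrom (n : ℕ) (x : ℕ → A) (r : ℕ) : Set A :=
  {a | ∃ j, r ≤ j ∧ j ≤ n ∧ ∃ l : List ℕ, (∀ t ∈ l, 1 ≤ t ∧ t ≤ n) ∧ a = x j * (l.map x).prod}

variable {n : ℕ} {x : ℕ → A}

theorem isWord_letter {t : ℕ} (h1 : 1 ≤ t) (hn : t ≤ n) : IsWord n x (x t) :=
  ⟨[t], by simpa using ⟨h1, hn⟩, by simp⟩

theorem IsWord.mul {w w' : A} (hw : IsWord n x w) (hw' : IsWord n x w') :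
    IsWord n x (w * w') := by
  obtain ⟨l, hl, rfl⟩ := hw
  obtain ⟨l', hl', rfl⟩ := hw'
  refine ⟨l ++ l', fun t ht => ?_, by simp⟩
  rcases List.mem_append.1 ht with ht | ht
  exacts [hl t ht, hl' t ht]

theorem isWord_intervalProd {a b : ℕ} (ha : 1 ≤ a) (hb : b ≤ n) :
    IsWord n x (intervalProd x a b) :=
  ⟨_, fun t ht => by rw [List.mem_range'_1] at ht; omega, rfl⟩

theorem letter_mul_mem_wordsFrom {r j : ℕ} {w : A} (hj : r ≤ j) (hjn : j ≤ n)
    (hw : IsWord n x w) : x j * w ∈ wordsFrom n x r := by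
  obtain ⟨l, hl, rfl⟩ := hw
  exact ⟨j, hj, hjn, l, hl, rfl⟩

theorem span_wordsFrom_anti {r r' : ℕ} (h : r ≤ r') :
    span k (wordsFrom n x r') ≤ span k (wordsFrom n x r) :=
  span_mono fun _ ⟨j, hj, hjn, l, hl, he⟩ => ⟨j, h.trans hj, hjn, l, hl, he⟩

theorem letter_mul_mem_span_wordsFrom {r i : ℕ} (hi : 1 ≤ i) (hin : i ≤ n)
    (hskew : ∀ j, r ≤ j → j ≤ n → SkewCommute k (x i) (x j)) {a : A}
    (ha : a ∈ span k (wordsFrom n x r)) : x i * a ∈ span k (wordsFrom n x r) := by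
  induction ha using span_induction with
  | mem a h =>
    obtain ⟨j, hj, hjn, l, hl, rfl⟩ := h
    obtain ⟨c, -, hc⟩ := hskew j hj hjn
    rw [← mul_assoc, hc, smul_mul_assoc, mul_assoc]
    exact smul_mem _ _ <| subset_span <| letter_mul_mem_wordsFrom hj hjn <|
      (isWord_letter hi hin).mul ⟨l, hl, rfl⟩
  | zero => simp
  | add a b _ _ iha ihb => rw [mul_add]; exact add_mem iha ihb
  | smul c a _ ih => rw [mul_smul_comm]; exact smul_mem _ _ ih

variable
  (hskew : ∀ i j, 1 ≤ j → j + 1 < i → i ≤ n → SkewCommute k (x i) (x j))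
  (hserre : ∀ i, 1 ≤ i → i + 1 ≤ n → ∃ α β : k, α ≠ 0 ∧
    x i * x (i + 1) * x i = α • (x i ^ 2 * x (i + 1)) + β • (x (i + 1) * x i ^ 2))
include hskew hserre

theorem exists_mul_intervalProd_mul_mul_sub_smul_mem {K b : ℕ} {w : A} (hK : 1 ≤ K)
    (hKn : K + 1 ≤ n) (hKb : K ≤ b) (hbn : b ≤ n) (hw : IsWord n x w) :
    ∃ α : k, α ≠ 0 ∧ x K * intervalProd x (K + 1) b * (x K * w)
      - α • (x K ^ 2 * (intervalProd x (K + 1) b * w)) ∈ span k (wordsFrom n x (K + 1)) := by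
  rcases hKb.eq_or_lt with rfl | hKb
  · refine ⟨1, one_ne_zero, ?_⟩
    simp [intervalProd_succ_self, sq, mul_assoc]
  set V := intervalProd x (K + 2) b
  obtain ⟨α, β, hα, hrel⟩ := hserre K hK hKn
  obtain ⟨c, hc, hV⟩ : SkewCommute k V (x K) :=
    SkewCommute.intervalProd_left fun t ht htb => hskew t K hK (by omega) (by omega)
  have hsplit : intervalProd x (K + 1) b = x (K + 1) * V := intervalProd_eq_mul x hKb
  refine ⟨c * α, mul_ne_zero hc hα, ?_⟩
  have h : x K * intervalProd x (K + 1) b * (x K * w)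
      - (c * α) • (x K ^ 2 * (intervalProd x (K + 1) b * w))
      = (c * β) • (x (K + 1) * (x K * (x K * (V * w)))) := by
    calc _ = x K * x (K + 1) * (V * x K) * w
            - (c * α) • (x K ^ 2 * (x (K + 1) * V * w)) := by
          rw [hsplit]; simp only [mul_assoc]
      _ = c • ((x K * x (K + 1) * x K) * V * w)
            - (c * α) • (x K ^ 2 * x (K + 1) * V * w) := by
          rw [hV]; simp only [mul_smul_comm, smul_mul_assoc, mul_assoc]
      _ = _ := by
          rw [hrel]; simp only [add_mul, smul_mul_assoc, sq, mul_assoc]; module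
  rw [h]
  exact smul_mem _ _ <| subset_span <| letter_mul_mem_wordsFrom le_rfl hKn <|
    (isWord_letter hK (by omega)).mul <| (isWord_letter hK (by omega)).mul <|
      (isWord_intervalProd (by omega) hbn).mul hw

theorem exists_intervalProd_mul_intervalProd_succ_sub_smul_mem {K m : ℕ} (hK : 1 ≤ K)
    (hKm : K ≤ m) (hm : m < n) :
    ∃ γ : k, γ ≠ 0 ∧ intervalProd x K m * intervalProd x K (m + 1)
      - γ • (intervalProd x K (m + 1) * intervalProd x K m) ∈ span k (wordsFrom n x (K + 1)) := by
  set W := intervalProd x (K + 1) m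
  set W' := intervalProd x (K + 1) (m + 1)
  obtain ⟨γ', hγ', hD⟩ : ∃ γ' : k, γ' ≠ 0 ∧
      x K ^ 2 * (W * W') - γ' • (x K ^ 2 * (W' * W)) ∈ span k (wordsFrom n x (K + 1)) := by
    rcases hKm.eq_or_lt with rfl | hlt
    · exact ⟨1, one_ne_zero, by simp [W, intervalProd_succ_self]⟩
    obtain ⟨γ', hγ', h⟩ :=
      exists_intervalProd_mul_intervalProd_succ_sub_smul_mem (K := K + 1) (by omega) hlt hm
    have hxK : ∀ j, K + 1 + 1 ≤ j → j ≤ n → SkewCommute k (x K) (x j) :=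
      fun j hj hjn => (hskew j K hK (by omega) hjn).symm
    refine ⟨γ', hγ', span_wordsFrom_anti (Nat.le_succ _) ?_⟩
    rw [← mul_smul_comm, ← mul_sub, sq, mul_assoc]
    exact letter_mul_mem_span_wordsFrom hK (by omega) hxK <|
      letter_mul_mem_span_wordsFrom hK (by omega) hxK h
  obtain ⟨α, hα, h₁⟩ := exists_mul_intervalProd_mul_mul_sub_smul_mem hskew hserre
    (b := m) (w := W') hK (by omega) hKm hm.le (isWord_intervalProd (by omega) (by omega))
  obtain ⟨β, hβ, h₂⟩ := exists_mul_intervalProd_mul_mul_sub_smul_mem hskew hserre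
    (b := m + 1) (w := W) hK (by omega) (by omega) hm (isWord_intervalProd (by omega) hm.le)
  refine ⟨α * γ' / β, div_ne_zero (mul_ne_zero hα hγ') hβ, ?_⟩
  rw [intervalProd_eq_mul x hKm, intervalProd_eq_mul x (show K ≤ m + 1 by omega)]
  exact sub_mul_div_smul_mem hβ h₁ h₂ hD
termination_by m - K

end Words

end

theorem stmt_11_general {k : Type*} [Field k] {A : Type*} [Ring A] [Algebra k A]
    (n : ℕ) (x : ℕ → A) (p : ℕ → ℕ → kˣ)
    (hne : ((p 1 1 : kˣ) : k) ≠ -1)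
    (hdiag : ∀ i, 1 ≤ i → i ≤ n → p i i = p 1 1)
    (hcomm : ∀ i j, 1 ≤ j → j + 1 < i → i ≤ n →
      x i * x j = ((p i j : kˣ) : k) • (x j * x i))
    (hserre2 : ∀ i, 1 ≤ i → i + 1 ≤ n →
      x i ^ 2 * x (i + 1) =
        (((p i (i + 1) : kˣ) : k) * (1 + ((p i i : kˣ) : k))) •
            (x i * x (i + 1) * x i)
          - (((p i (i + 1) : kˣ) : k) ^ 2 * ((p i i : kˣ) : k)) •
            (x (i + 1) * x i ^ 2))
    (K m : ℕ) (hK : 1 ≤ K) (hKm : K ≤ m) (hm : m < n) :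
    ∃ γ : k, γ ≠ 0 ∧
      ((List.range' K (m + 1 - K)).map x).prod *
          ((List.range' K (m + 2 - K)).map x).prod
        - γ • (((List.range' K (m + 2 - K)).map x).prod *
            ((List.range' K (m + 1 - K)).map x).prod) ∈
        Submodule.span k {a : A | ∃ j, K + 1 ≤ j ∧ j ≤ n ∧
          ∃ l : List ℕ, (∀ t ∈ l, 1 ≤ t ∧ t ≤ n) ∧ a = x j * (l.map x).prod} := by
  have hskew : ∀ i j, 1 ≤ j → j + 1 < i → i ≤ n → SkewCommute k (x i) (x j) :=
    fun i j hj hji hi => ⟨_, Units.ne_zero _, hcomm i j hj hji hi⟩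
  have hserre : ∀ i, 1 ≤ i → i + 1 ≤ n → ∃ α β : k, α ≠ 0 ∧
      x i * x (i + 1) * x i = α • (x i ^ 2 * x (i + 1)) + β • (x (i + 1) * x i ^ 2) := by
    intro i hi hin
    have hpii : 1 + ((p i i : kˣ) : k) ≠ 0 := by
      rw [hdiag i hi (by omega)]
      exact fun h => hne (eq_neg_of_add_eq_zero_right h)
    exact exists_mul_mul_eq_of_sq_mul_eq (mul_ne_zero (Units.ne_zero _) hpii) (hserre2 i hi hin)
  exact exists_intervalProd_mul_intervalProd_succ_sub_smul_mem hskew hserre hK hKm hm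

/-- In (any algebra satisfying the relations of) the quantum enveloping
algebra of type `Aₙ` with `p₁₁ ≠ -1`, for `1 ≤ K ≤ m < n` the relation
`u_{Km} u_{K,m+1} ≡_{K+1} γ u_{K,m+1} u_{Km}` holds for some nonzero scalar
`γ`, where `u_{Km} = x_K ⋯ x_m` and `≡_{K+1}` is equality modulo the span of
words beginning with a letter `x_j`, `K+1 ≤ j ≤ n`. -/
theorem stmt_11 {k : Type*} [Field k] {A : Type*} [Ring A] [Algebra k A]
    (n : ℕ) (x : ℕ → A) (p : ℕ → ℕ → kˣ)
    (hne : ((p 1 1 : kˣ) : k) ≠ -1)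
    (hdiag : ∀ i, 1 ≤ i → i ≤ n → p i i = p 1 1)
    (hadj : ∀ i, 1 ≤ i → i + 1 ≤ n → p i (i + 1) * p (i + 1) i = (p 1 1)⁻¹)
    (hdist : ∀ i j, 1 ≤ j → j + 1 < i → i ≤ n → p i j * p j i = 1)
    (hcomm : ∀ i j, 1 ≤ j → j + 1 < i → i ≤ n →
      x i * x j = ((p i j : kˣ) : k) • (x j * x i))
    (hserre1 : ∀ i, 1 ≤ i → i + 1 ≤ n →
      x i * x (i + 1) ^ 2 =
        (((p i (i + 1) : kˣ) : k) * (1 + ((p (i + 1) (i + 1) : kˣ) : k))) •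
            (x (i + 1) * x i * x (i + 1))
          - (((p i (i + 1) : kˣ) : k) ^ 2 * ((p (i + 1) (i + 1) : kˣ) : k)) •
            (x (i + 1) ^ 2 * x i))
    (hserre2 : ∀ i, 1 ≤ i → i + 1 ≤ n →
      x i ^ 2 * x (i + 1) =
        (((p i (i + 1) : kˣ) : k) * (1 + ((p i i : kˣ) : k))) •
            (x i * x (i + 1) * x i)
          - (((p i (i + 1) : kˣ) : k) ^ 2 * ((p i i : kˣ) : k)) •
            (x (i + 1) * x i ^ 2))
    (K m : ℕ) (hK : 1 ≤ K) (hKm : K ≤ m) (hm : m < n) :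
    ∃ γ : k, γ ≠ 0 ∧
      ((List.range' K (m + 1 - K)).map x).prod *
          ((List.range' K (m + 2 - K)).map x).prod
        - γ • (((List.range' K (m + 2 - K)).map x).prod *
            ((List.range' K (m + 1 - K)).map x).prod) ∈
        Submodule.span k {a : A | ∃ j, K + 1 ≤ j ∧ j ≤ n ∧
          ∃ l : List ℕ, (∀ t ∈ l, 1 ≤ t ∧ t ≤ n) ∧ a = x j * (l.map x).prod} :=
  stmt_11_general n x p hne hdiag hcomm hserre2 K m hK hKm hm
end

section
/- In the Drinfeld–Jimbo-type quantification of type Aₙ, the Serre relations admit a quantification (i.e., the quantified relations are quantum operations / skew-primitive) if and only if the parameters satisfy p_{ii} = p₁₁, p_{i,i+1} p_{i+1,i} = p₁₁⁻¹, and p_{ij} p_{ji} = 1 for i − j > 1. -/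
/-!
Both directions rest on explicit coproducts. If `x, y` are `(X, 1)`- and `(Y, 1)`-skew-primitive
with `x Y = p Y x`, `y X = q X y` and `XY = YX`, then the skew commutator `b = [x, y]_p` has
coproduct `b ⊗ 1 + XY ⊗ b + (1 - pq) Xy ⊗ x`, and the Serre polynomial `[x, b]_{Pp}` (with
`x X = P X x`) differs from a skew-primitive element by terms with coefficients
`(1 + P)(1 - Ppq)` and `(1 - pq)(1 - Ppq)`. Hence the conditions suffice in every bialgebra.

For necessity, test in Kharchenko's free character algebra `G⟨X⟩`, where the monomials
`γ_h x_w` (`h ∈ G`, `w` a word in the variables) are linearly independent: `G⟨X⟩` acts on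
`k[G × X*]`, sending `δ_(1,1)` to `δ_(h,w)` under `γ_h x_w`. The defect terms then vanish only
if their coefficients do, `P ≠ -1` turns `(1 + P)(1 - Ppq) = 0` into `Ppq = 1`, and walking along
adjacent indices propagates `p_ii = p_11`.
-/

open TensorProduct

section SkewCommutator

variable {k H : Type*} [CommRing k] [Ring H] [Algebra k H] (Δ : H →ₐ[k] H ⊗[k] H)

lemma mul_mul_of_mul_eq_smul {x X : H} {P : k} (h : x * X = P • (X * x)) (t : H) :
    x * (X * t) = P • (X * (x * t)) := by
  rw [← mul_assoc, h, smul_mul_assoc, mul_assoc]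

lemma comul_skewCommutator {x y X Y : H} {p q : k}
    (hx : Δ x = x ⊗ₜ[k] 1 + X ⊗ₜ[k] x)
    (hy : Δ y = y ⊗ₜ[k] 1 + Y ⊗ₜ[k] y)
    (hxY : x * Y = p • (Y * x)) (hyX : y * X = q • (X * y)) (hXY : Y * X = X * Y) :
    Δ (x * y - p • (y * x))
      = (x * y - p • (y * x)) ⊗ₜ[k] 1 + (X * Y) ⊗ₜ[k] (x * y - p • (y * x))
        + (1 - p * q) • ((X * y) ⊗ₜ[k] x) := by
  simp only [map_sub, map_smul, map_mul, hx, hy, add_mul, mul_add,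
    Algebra.TensorProduct.tmul_mul_tmul, mul_one, one_mul, hxY, hyX, hXY,
    ← TensorProduct.smul_tmul', TensorProduct.tmul_smul, TensorProduct.sub_tmul,
    TensorProduct.tmul_sub]
  module

lemma comul_serre {x y X Y : H} {P p q : k}
    (hx : Δ x = x ⊗ₜ[k] 1 + X ⊗ₜ[k] x)
    (hy : Δ y = y ⊗ₜ[k] 1 + Y ⊗ₜ[k] y)
    (hxX : x * X = P • (X * x)) (hxY : x * Y = p • (Y * x)) (hyX : y * X = q • (X * y))
    (hXY : Y * X = X * Y) :
    Δ (x * (x * y - p • (y * x)) - (P * p) • ((x * y - p • (y * x)) * x))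
      = (x * (x * y - p • (y * x)) - (P * p) • ((x * y - p • (y * x)) * x)) ⊗ₜ[k] 1
        + (X * (X * Y)) ⊗ₜ[k]
            (x * (x * y - p • (y * x)) - (P * p) • ((x * y - p • (y * x)) * x))
        + (((1 + P) * (1 - P * (p * q))) • ((X * (x * y)) ⊗ₜ[k] x)
          - (p * ((1 + P) * (1 - P * (p * q)))) • ((X * (y * x)) ⊗ₜ[k] x)
          + ((1 - p * q) * (1 - P * (p * q))) • ((X * (X * y)) ⊗ₜ[k] (x * x))) := by
  rw [map_sub, map_smul, map_mul, map_mul, hx,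
    comul_skewCommutator Δ hx hy hxY hyX hXY]
  simp only [add_mul, mul_add, mul_sub, sub_mul, smul_mul_assoc, mul_smul_comm, smul_smul,
    Algebra.TensorProduct.tmul_mul_tmul, mul_one, one_mul, mul_assoc,
    mul_mul_of_mul_eq_smul hxX, mul_mul_of_mul_eq_smul hyX, hXY, hxX, hxY, hyX,
    ← TensorProduct.smul_tmul', TensorProduct.tmul_smul, TensorProduct.sub_tmul,
    TensorProduct.tmul_sub]
  module

lemma comul_skewCommutator_of_mul_eq_one {x y X Y : H} {p q : k}
    (hx : Δ x = x ⊗ₜ[k] 1 + X ⊗ₜ[k] x) (hy : Δ y = y ⊗ₜ[k] 1 + Y ⊗ₜ[k] y)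
    (hxY : x * Y = p • (Y * x)) (hyX : y * X = q • (X * y)) (hXY : Y * X = X * Y)
    (hpq : p * q = 1) :
    Δ (x * y - p • (y * x))
      = (x * y - p • (y * x)) ⊗ₜ[k] 1 + (X * Y) ⊗ₜ[k] (x * y - p • (y * x)) := by
  simpa [hpq] using comul_skewCommutator Δ hx hy hxY hyX hXY

lemma comul_serre_of_mul_mul_eq_one {x y X Y : H} {P p q : k}
    (hx : Δ x = x ⊗ₜ[k] 1 + X ⊗ₜ[k] x) (hy : Δ y = y ⊗ₜ[k] 1 + Y ⊗ₜ[k] y)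
    (hxX : x * X = P • (X * x)) (hxY : x * Y = p • (Y * x)) (hyX : y * X = q • (X * y))
    (hXY : Y * X = X * Y) (hPpq : P * (p * q) = 1) :
    Δ (x * (x * y - p • (y * x)) - (P * p) • ((x * y - p • (y * x)) * x))
      = (x * (x * y - p • (y * x)) - (P * p) • ((x * y - p • (y * x)) * x)) ⊗ₜ[k] 1
        + (X * (X * Y)) ⊗ₜ[k]
            (x * (x * y - p • (y * x)) - (P * p) • ((x * y - p • (y * x)) * x)) := by
  simpa [hPpq] using comul_serre Δ hx hy hxX hxY hyX hXY

end SkewCommutator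

lemma Fin.apply_eq_apply_zero_of_apply_eq_apply_succ {α : Type*} {n : ℕ} {f : Fin n → α}
    (h : ∀ i j : Fin n, (i : ℕ) + 1 = j → f i = f j) (i : Fin n) : f i = f ⟨0, i.pos⟩ := by
  obtain ⟨m, hm⟩ := i
  induction m with
  | zero => rfl
  | succ m ih => rw [← h ⟨m, by omega⟩ ⟨m + 1, hm⟩ rfl, ih]

namespace FreeCharacterAlgebra

variable {k G X : Type*} [CommRing k] [CommGroup G] (χ : X → G →* kˣ)

inductive Rel : FreeAlgebra k (G ⊕ X) → FreeAlgebra k (G ⊕ X) → Prop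
  | mul (h₁ h₂ : G) :
      Rel (FreeAlgebra.ι k (.inl h₁) * FreeAlgebra.ι k (.inl h₂)) (FreeAlgebra.ι k (.inl (h₁ * h₂)))
  | one : Rel (FreeAlgebra.ι k (.inl 1)) 1
  | comm (i : X) (h : G) :
      Rel (FreeAlgebra.ι k (.inr i) * FreeAlgebra.ι k (.inl h))
        ((χ i h : k) • (FreeAlgebra.ι k (.inl h) * FreeAlgebra.ι k (.inr i)))

end FreeCharacterAlgebra

/-- Kharchenko's free character algebra `G⟨X⟩`, the skew group algebra of `k⟨X⟩` over `G`. -/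
abbrev FreeCharacterAlgebra {k G X : Type*} [CommRing k] [CommGroup G] (χ : X → G →* kˣ) :=
  RingQuot (FreeCharacterAlgebra.Rel χ)

namespace FreeCharacterAlgebra

open RingQuot

section CommRing

variable {k G X : Type*} [CommRing k] [CommGroup G] (χ : X → G →* kˣ)

noncomputable def grp : G →* FreeCharacterAlgebra χ where
  toFun h := mkAlgHom k (Rel χ) (FreeAlgebra.ι k (.inl h))
  map_one' := (mkAlgHom_rel k Rel.one).trans (map_one _)
  map_mul' h₁ h₂ := by rw [← map_mul]; exact (mkAlgHom_rel k (Rel.mul h₁ h₂)).symm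

noncomputable def var (i : X) : FreeCharacterAlgebra χ :=
  mkAlgHom k (Rel χ) (FreeAlgebra.ι k (.inr i))

lemma var_mul_grp (i : X) (h : G) : var χ i * grp χ h = (χ i h : k) • (grp χ h * var χ i) := by
  simp only [var, grp, MonoidHom.coe_mk, OneHom.coe_mk, ← map_mul, ← map_smul]
  exact mkAlgHom_rel k (Rel.comm i h)

section Lift

variable {χ} {A : Type*} [Semiring A] [Algebra k A]

noncomputable def lift (f : G →* A) (y : X → A)
    (hy : ∀ i h, y i * f h = (χ i h : k) • (f h * y i)) :
    FreeCharacterAlgebra χ →ₐ[k] A :=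
  liftAlgHom k ⟨FreeAlgebra.lift k (Sum.elim f y), by
    rintro _ _ (⟨h₁, h₂⟩ | _ | ⟨i, h⟩) <;> simp [hy]⟩

@[simp] lemma lift_grp (f : G →* A) (y : X → A) (hy) (h : G) : lift f y hy (grp χ h) = f h := by
  simp [lift, grp]

@[simp] lemma lift_var (f : G →* A) (y : X → A) (hy) (i : X) : lift f y hy (var χ i) = y i := by
  simp [lift, var]

lemma hom_ext {φ ψ : FreeCharacterAlgebra χ →ₐ[k] A} (hg : ∀ h, φ (grp χ h) = ψ (grp χ h))
    (hv : ∀ i, φ (var χ i) = ψ (var χ i)) : φ = ψ :=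
  ringQuot_ext' _ _ _ (FreeAlgebra.hom_ext (funext (Sum.rec hg hv)))

end Lift

variable (g : X → G)

noncomputable def comulHom :
    FreeCharacterAlgebra χ →ₐ[k] FreeCharacterAlgebra χ ⊗[k] FreeCharacterAlgebra χ :=
  lift
    { toFun h := grp χ h ⊗ₜ[k] grp χ h
      map_one' := by simp [Algebra.TensorProduct.one_def]
      map_mul' h₁ h₂ := by simp [Algebra.TensorProduct.tmul_mul_tmul] }
    (fun i => var χ i ⊗ₜ[k] 1 + grp χ (g i) ⊗ₜ[k] var χ i)
    (fun i h => by
      change _ * (grp χ h ⊗ₜ[k] grp χ h) = _ • ((grp χ h ⊗ₜ[k] grp χ h) * _)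
      simp only [add_mul, mul_add, Algebra.TensorProduct.tmul_mul_tmul, one_mul, mul_one,
        var_mul_grp, ← map_mul, mul_comm (g i) h, ← TensorProduct.smul_tmul',
        TensorProduct.tmul_smul, smul_add])

noncomputable def counitHom : FreeCharacterAlgebra χ →ₐ[k] k :=
  lift 1 0 (by simp)

@[simp] lemma comulHom_grp (h : G) : comulHom χ g (grp χ h) = grp χ h ⊗ₜ[k] grp χ h :=
  lift_grp ..

@[simp] lemma comulHom_var (i : X) :
    comulHom χ g (var χ i) = var χ i ⊗ₜ[k] 1 + grp χ (g i) ⊗ₜ[k] var χ i := by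
  simp [comulHom]

@[simp] lemma counitHom_grp (h : G) : counitHom χ (grp χ h) = 1 := by simp [counitHom]

@[simp] lemma counitHom_var (i : X) : counitHom χ (var χ i) = 0 := by simp [counitHom]

-- Not an instance: the coproduct depends on the choice of `g`.
noncomputable abbrev bialgebra : Bialgebra k (FreeCharacterAlgebra χ) :=
  .ofAlgHom (comulHom χ g) (counitHom χ)
    (hom_ext (by simp) (by simp [TensorProduct.add_tmul, TensorProduct.tmul_add,
      Algebra.TensorProduct.one_def, add_assoc]))
    (hom_ext (by simp) (by simp))
    (hom_ext (by simp) (by simp))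

noncomputable def varWord : FreeMonoid X →* FreeCharacterAlgebra χ := FreeMonoid.lift (var χ)

noncomputable def translate : G →* Module.End k ((G × FreeMonoid X) →₀ k) where
  toFun h := Finsupp.lmapDomain k k fun p => (h * p.1, p.2)
  map_one' := by ext; simp
  map_mul' h₁ h₂ := by ext; simp [mul_assoc]

-- The twist `χ_i(a)` is what makes `x_i γ_h = χ_i(h) γ_h x_i` hold on `k[G × X*]`.
noncomputable def prepend (i : X) : Module.End k ((G × FreeMonoid X) →₀ k) :=
  Finsupp.lsum k fun p => (χ i p.1 : k) • Finsupp.lsingle (p.1, FreeMonoid.of i * p.2)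

@[simp] lemma translate_single (h a : G) (w : FreeMonoid X) (c : k) :
    translate h (Finsupp.single (a, w) c) = Finsupp.single (h * a, w) c := by
  simp [translate]

@[simp] lemma prepend_single (i : X) (a : G) (w : FreeMonoid X) (c : k) :
    prepend χ i (Finsupp.single (a, w) c)
      = (χ i a : k) • Finsupp.single (a, FreeMonoid.of i * w) c := by
  simp [prepend]

noncomputable def rep : FreeCharacterAlgebra χ →ₐ[k] Module.End k ((G × FreeMonoid X) →₀ k) :=
  lift translate (prepend χ) fun i h => Finsupp.lhom_ext fun ⟨a, w⟩ c => by
    simp only [Module.End.mul_apply, LinearMap.smul_apply, translate_single, prepend_single,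
      map_smul, smul_smul, map_mul, Units.val_mul]

@[simp] lemma rep_grp (h : G) : rep χ (grp χ h) = translate h := lift_grp ..

@[simp] lemma rep_var (i : X) : rep χ (var χ i) = prepend χ i := lift_var ..

@[simp] lemma varWord_of (i : X) : varWord χ (FreeMonoid.of i) = var χ i :=
  FreeMonoid.lift_eval_of ..

lemma rep_varWord (w v : FreeMonoid X) (c : k) :
    rep χ (varWord χ w) (Finsupp.single (1, v) c) = Finsupp.single (1, w * v) c := by
  induction w using FreeMonoid.inductionOn' with
  | one => simp
  | of_mul i w ih => simp [ih, mul_assoc]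

lemma linearIndependent_monomial :
    LinearIndependent k fun p : G × FreeMonoid X => grp χ p.1 * varWord χ p.2 := by
  refine LinearIndependent.of_comp
    (LinearMap.applyₗ (Finsupp.single (1, 1) 1) ∘ₗ (rep χ).toLinearMap) ?_
  convert Finsupp.linearIndependent_single_one k (G × FreeMonoid X) with p
  simp [rep_varWord]

end CommRing

section Field

variable {k G X : Type*} [Field k] [CommGroup G] (χ : X → G →* kˣ) (g : X → G)

lemma linearIndependent_monomial_tmul :
    LinearIndependent k fun p : (G × FreeMonoid X) × (G × FreeMonoid X) =>
      (grp χ p.1.1 * varWord χ p.1.2) ⊗ₜ[k] (grp χ p.2.1 * varWord χ p.2.2) := by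
  -- stated first without the expected type: unifying the two families directly times out
  have := (linearIndependent_monomial χ).tmul_of_isDomain (linearIndependent_monomial χ)
  exact this

lemma char_mul_char_eq_one_of_comulHom_skewCommutator (i j : X)
    (h : comulHom χ g (var χ i * var χ j - (χ i (g j) : k) • (var χ j * var χ i))
      = (var χ i * var χ j - (χ i (g j) : k) • (var χ j * var χ i)) ⊗ₜ[k] 1
        + grp χ (g i * g j) ⊗ₜ[k] (var χ i * var χ j - (χ i (g j) : k) • (var χ j * var χ i))) :
    χ i (g j) * χ j (g i) = 1 := by
  have hL1 := comul_skewCommutator (comulHom χ g) (comulHom_var χ g i) (comulHom_var χ g j)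
    (var_mul_grp χ i (g j)) (var_mul_grp χ j (g i)) (by rw [← map_mul, ← map_mul, mul_comm])
  rw [map_mul] at h
  have hzero : (1 - (χ i (g j) : k) * χ j (g i)) • ((grp χ (g i) * var χ j) ⊗ₜ[k] var χ i) = 0 := by
    simpa only [add_sub_cancel_left] using sub_eq_zero.mpr (hL1.symm.trans h)
  have hne := (linearIndependent_monomial_tmul χ).ne_zero ((g i, .of j), (1, .of i))
  simp only [varWord_of, map_one, one_mul] at hne
  have := sub_eq_zero.mp ((smul_eq_zero.mp hzero).resolve_right hne)
  ext
  simpa using this.symm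

lemma coeff_eq_zero_of_serre_remainder {i j : X} (hij : i ≠ j) {A B C : k}
    (h : A • ((grp χ (g i) * (var χ i * var χ j)) ⊗ₜ[k] var χ i)
      - B • ((grp χ (g i) * (var χ j * var χ i)) ⊗ₜ[k] var χ i)
      + C • ((grp χ (g i) * (grp χ (g i) * var χ j)) ⊗ₜ[k] (var χ i * var χ i)) = 0) :
    A = 0 := by
  set p₁ : (G × FreeMonoid X) × (G × FreeMonoid X) := ((g i, .of i * .of j), (1, .of i))
  set p₂ : (G × FreeMonoid X) × (G × FreeMonoid X) := ((g i, .of j * .of i), (1, .of i))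
  set p₃ : (G × FreeMonoid X) × (G × FreeMonoid X) := ((g i * g i, .of j), (1, .of i * .of i))
  have hw : FreeMonoid.of i * FreeMonoid.of j ≠ .of j * .of i := fun h => by
    have := congrArg FreeMonoid.toList h
    simp only [FreeMonoid.toList_mul, FreeMonoid.toList_of, List.singleton_append,
      List.cons.injEq] at this
    exact hij this.1
  have h₁₂ : p₁ ≠ p₂ := by simp [p₁, p₂, hw]
  have h₁₃ : p₁ ≠ p₃ := by simp [p₁, p₃]
  have hli := linearIndependent_monomial_tmul χ
  unfold LinearIndependent at hli
  have hl : Finsupp.single p₁ A - Finsupp.single p₂ B + Finsupp.single p₃ C = 0 :=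
    hli (by simpa [p₁, p₂, p₃, mul_assoc] using h)
  simpa [h₁₂, h₁₃] using congr($hl p₁)

lemma char_mul_char_mul_char_eq_one_of_comulHom_serre {i j : X} (hij : i ≠ j)
    (hP : (χ i (g i) : k) ≠ -1)
    (h : let b := var χ i * var χ j - (χ i (g j) : k) • (var χ j * var χ i)
      let s := var χ i * b - (χ i (g i * g j) : k) • (b * var χ i)
      comulHom χ g s = s ⊗ₜ[k] 1 + grp χ (g i ^ 2 * g j) ⊗ₜ[k] s) :
    χ i (g i) * (χ i (g j) * χ j (g i)) = 1 := by
  have hL2 := comul_serre (comulHom χ g) (comulHom_var χ g i) (comulHom_var χ g j)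
    (var_mul_grp χ i (g i)) (var_mul_grp χ i (g j)) (var_mul_grp χ j (g i)) (by rw [← map_mul, ← map_mul, mul_comm])
  have hgrp : grp χ (g i ^ 2 * g j) = grp χ (g i) * (grp χ (g i) * grp χ (g j)) := by
    simp [pow_two, mul_assoc]
  simp only [map_mul (χ i), Units.val_mul, hgrp] at h
  have hA := coeff_eq_zero_of_serre_remainder χ g hij
    (by simpa only [add_sub_cancel_left] using sub_eq_zero.mpr (hL2.symm.trans h))
  have h1P : 1 + (χ i (g i) : k) ≠ 0 := fun h0 => hP (by linear_combination h0)
  ext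
  simpa using (sub_eq_zero.mp ((mul_eq_zero.mp hA).resolve_left h1P)).symm

end Field

end FreeCharacterAlgebra

open FreeCharacterAlgebra in
/-- Corollary: the type `Aₙ` Serre relations, with the Lie operation replaced
by the skew commutator, admit a quantification — i.e. the quantified Serre
polynomials take skew-primitive values in every Hopf algebra whenever the
variables take skew-primitive semi-invariant values — if and only if
`p_{ii} = p₁₁`, `p_{i,i+1} p_{i+1,i} = p₁₁⁻¹`, and `p_{ij} p_{ji} = 1` for
`|i−j| > 1`, where `p_{ij} = χ^{x_i}(g_{x_j})`.  (Here, as in Corollary 2.4,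
`p_{ii}` is assumed not to be a primitive square root of unity.) -/
theorem stmt_13 (k : Type) [Field k] (n : ℕ) (hn : 2 ≤ n)
    (G : Type) [CommGroup G] (g : Fin n → G) (χ : Fin n → G →* kˣ)
    (hroot : ∀ i : Fin n, ((χ i (g i) : kˣ) : k) ≠ -1) :
    (∀ (H : Type) [Ring H] [Bialgebra k H],
      ∀ (Γ : G →* Hˣ) (a : Fin n → H),
        (∀ h : G, Coalgebra.comul (R := k) ((Γ h : Hˣ) : H)
          = ((Γ h : Hˣ) : H) ⊗ₜ[k] ((Γ h : Hˣ) : H)) →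
        (∀ i : Fin n, Coalgebra.comul (R := k) (a i)
          = a i ⊗ₜ[k] 1 + ((Γ (g i) : Hˣ) : H) ⊗ₜ[k] a i) →
        (∀ (i : Fin n) (h : G),
          a i * ((Γ h : Hˣ) : H) = ((χ i h : kˣ) : k) • (((Γ h : Hˣ) : H) * a i)) →
        ∀ i j : Fin n, i ≠ j →
          ((((i : ℕ) + 1 = (j : ℕ)) ∨ ((j : ℕ) + 1 = (i : ℕ))) →
            (let b := a i * a j - ((χ i (g j) : kˣ) : k) • (a j * a i);
             let s := a i * b - ((χ i (g i * g j) : kˣ) : k) • (b * a i);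
             Coalgebra.comul (R := k) s
               = s ⊗ₜ[k] 1 + ((Γ (g i ^ 2 * g j) : Hˣ) : H) ⊗ₜ[k] s)) ∧
          ((((i : ℕ) + 1 < (j : ℕ)) ∨ ((j : ℕ) + 1 < (i : ℕ))) →
            (let b := a i * a j - ((χ i (g j) : kˣ) : k) • (a j * a i);
             Coalgebra.comul (R := k) b
               = b ⊗ₜ[k] 1 + ((Γ (g i * g j) : Hˣ) : H) ⊗ₜ[k] b)))
    ↔ ((∀ i : Fin n, χ i (g i) = χ ⟨0, by omega⟩ (g ⟨0, by omega⟩)) ∧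
       (∀ i j : Fin n, (i : ℕ) + 1 = (j : ℕ) →
          χ i (g j) * χ j (g i) = (χ ⟨0, by omega⟩ (g ⟨0, by omega⟩))⁻¹) ∧
       (∀ i j : Fin n, (i : ℕ) + 1 < (j : ℕ) → χ i (g j) * χ j (g i) = 1)) := by
  constructor
  · intro hquant
    let _ := bialgebra χ g
    have key := hquant _ (grp χ).toHomUnits (var χ) (comulHom_grp χ g) (comulHom_var χ g)
      (var_mul_grp χ)
    have hserre (i j : Fin n) (hv : (i : ℕ) + 1 = j ∨ (j : ℕ) + 1 = i) :
        χ i (g i) * (χ i (g j) * χ j (g i)) = 1 :=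
      char_mul_char_mul_char_eq_one_of_comulHom_serre χ g (by omega) (hroot i)
        ((key i j (by omega)).1 hv)
    have hdiag (i j : Fin n) (hv : (i : ℕ) + 1 = j) : χ i (g i) = χ j (g j) := by
      have := hserre j i (.inr hv)
      rw [mul_comm (χ j (g i))] at this
      exact (eq_inv_of_mul_eq_one_left (hserre i j (.inl hv))).trans
        (eq_inv_of_mul_eq_one_left this).symm
    refine ⟨Fin.apply_eq_apply_zero_of_apply_eq_apply_succ hdiag, fun i j hv => ?_, fun i j hv =>
      char_mul_char_eq_one_of_comulHom_skewCommutator χ g i j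
        ((key i j (by omega)).2 (.inl hv))⟩
    rw [← Fin.apply_eq_apply_zero_of_apply_eq_apply_succ hdiag i]
    exact eq_inv_of_mul_eq_one_right (hserre i j (.inl hv))
  · rintro ⟨hdiag, hadj, hfar⟩ H _ _ Γ a - hsp hcomm i j hij
    have hXY : ((Γ (g j) : Hˣ) : H) * Γ (g i) = Γ (g i) * Γ (g j) := by
      rw [← Units.val_mul, ← Units.val_mul, ← map_mul, ← map_mul, mul_comm]
    constructor
    · intro hv
      have hPpq : χ i (g i) * (χ i (g j) * χ j (g i)) = 1 := by
        rcases hv with hv | hv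
        · rw [hadj i j hv, hdiag i, mul_inv_cancel]
        · rw [mul_comm (χ i (g j)), hadj j i hv, hdiag i, mul_inv_cancel]
      simpa only [Bialgebra.comulAlgHom_apply, map_mul, Units.val_mul, pow_two, mul_assoc] using
        comul_serre_of_mul_mul_eq_one (Bialgebra.comulAlgHom k H) (hsp i) (hsp j)
          (hcomm i (g i)) (hcomm i (g j)) (hcomm j (g i)) hXY (by simpa using congr(($hPpq : k)))
    · intro hv
      have hpq : χ i (g j) * χ j (g i) = 1 := by
        rcases hv with hv | hv
        · exact hfar i j hv
        · rw [mul_comm]; exact hfar j i hv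
      simpa only [Bialgebra.comulAlgHom_apply, map_mul, Units.val_mul] using
        comul_skewCommutator_of_mul_eq_one (Bialgebra.comulAlgHom k H) (hsp i) (hsp j)
          (hcomm i (g j)) (hcomm j (g i)) hXY (by simpa using congr(($hpq : k)))
end

section
/- Let u_{km} = x_k ⋯ x_m and consider the set B of super-letters [u_{km}], 1 ≤ k ≤ m ≤ n, for type Aₙ. For each of the following super-letters [u], every super-word in super-letters from B strictly smaller than [u] has a different multidegree (constitution) than [u]: (i) [x_k u_{k+1,s}] satisfies deg_k > deg_{s+1}; (ii) [x_k u_{rs}] with k ≤ r ≠ k+1 satisfies deg_k > deg_{k+1}; (iii) [u_{km} u_{k+1,s}] with m ≥ s satisfies deg_k > deg_{m+1}; (iv) [u_{km} u_{ks}] with m < s satisfies deg_k > deg_{m+1}. In particular, no power [u_{km}]^h has the same constitution as any super-word in smaller super-letters from B. -/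
/-- `uW k m` is the word `x_k x_{k+1} ⋯ x_m`. -/
def uW (k m : ℕ) : List ℕ := List.range' k (m + 1 - k)

lemma count_uW (k m i : ℕ) : (uW k m).count i = if k ≤ i ∧ i ≤ m then 1 else 0 := by
  split_ifs with hi
  · exact List.count_eq_one_of_mem List.nodup_range' (List.mem_range'_1.2 (by omega))
  · exact List.count_eq_zero_of_not_mem (by rw [uW, List.mem_range'_1]; omega)

lemma uW_eq_cons {k m : ℕ} (h : k ≤ m) : uW k m = k :: uW (k + 1) m := by
  rw [uW, uW, show m + 1 - k = (m + 1 - (k + 1)) + 1 by omega, List.range'_succ]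

lemma uW_prefix_uW {k a b : ℕ} (hka : k ≤ a) (hab : a ≤ b) : uW k a <+: uW k b := by
  have h := List.range'_append (s := k) (m := a + 1 - k) (n := b - a) (step := 1)
  rw [show k + 1 * (a + 1 - k) = a + 1 by omega,
    show a + 1 - k + (b - a) = b + 1 - k by omega] at h
  rw [uW, uW, ← h]
  exact List.prefix_append _ _

lemma wltN.not_isPrefix {u v : List ℕ} (h : wltN u v) : ¬ u <+: v := by
  intro huv
  rcases h with ⟨hvu, hne⟩ | ⟨p, a, b, u', v', rfl, rfl, hba⟩
  · exact hne (hvu.eq_of_length (le_antisymm hvu.length_le huv.length_le))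
  · obtain ⟨t, ht⟩ := huv
    simp only [List.append_assoc, List.cons_append, List.append_cancel_left_eq,
      List.cons.injEq] at ht
    omega

lemma wltN.head_le {a b : ℕ} {u v : List ℕ} (h : wltN (a :: u) (b :: v)) : b ≤ a := by
  rcases h with ⟨⟨t, ht⟩, -⟩ | ⟨_ | ⟨x, p⟩, a', b', u', v', hu, hv, hba⟩
  · cases ht; rfl
  · simp only [List.nil_append, List.cons.injEq] at hu hv; omega
  · simp only [List.cons_append, List.cons.injEq] at hu hv; omega

lemma eq_and_lt_of_uW_wltN_uW_append {q₁ q₂ k m : ℕ} {r : List ℕ} (hq : q₁ ≤ q₂)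
    (hkm : k ≤ m) (hq₁ : q₁ ≤ k) (hq₂ : k ≤ q₂) (h : wltN (uW q₁ q₂) (uW k m ++ r)) :
    q₁ = k ∧ m < q₂ := by
  have hhead : k ≤ q₁ := by
    rw [uW_eq_cons hq, uW_eq_cons hkm, List.cons_append] at h
    exact h.head_le
  obtain rfl : q₁ = k := le_antisymm hq₁ hhead
  refine ⟨rfl, lt_of_not_ge fun hq₂m => h.not_isPrefix ?_⟩
  exact (uW_prefix_uW hq₂ hq₂m).trans (List.prefix_append _ _)

lemma count_le_count_of_uW_wltN_uW_append {q₁ q₂ k m : ℕ} {r : List ℕ} (hq : q₁ ≤ q₂)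
    (hkm : k ≤ m) (h : wltN (uW q₁ q₂) (uW k m ++ r)) :
    (uW q₁ q₂).count k ≤ (uW q₁ q₂).count (m + 1) := by
  rw [count_uW, count_uW]
  by_cases hk : q₁ ≤ k ∧ k ≤ q₂
  · have := eq_and_lt_of_uW_wltN_uW_append hq hkm hk.1 hk.2 h
    split_ifs <;> omega
  · simp [hk]

lemma List.count_flatten_le_count_flatten {α : Type*} [BEq α] {a b : α} {L : List (List α)}
    (h : ∀ l ∈ L, l.count a ≤ l.count b) : L.flatten.count a ≤ L.flatten.count b := by
  rw [List.count_flatten, List.count_flatten]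
  exact List.sum_le_sum h

lemma not_count_flatten_eq_of_wltN_uW_append {k m : ℕ} {r w : List ℕ} (hkm : k ≤ m)
    (hw : w.count (m + 1) < w.count k) {L : List (ℕ × ℕ)}
    (hL : ∀ q ∈ L, q.1 ≤ q.2 ∧ wltN (uW q.1 q.2) (uW k m ++ r)) :
    ¬ ∀ i, ((L.map fun q => uW q.1 q.2).flatten).count i = w.count i := by
  intro heq
  have hle := List.count_flatten_le_count_flatten (a := k) (b := m + 1)
    (L := L.map fun q => uW q.1 q.2) (by
      simp only [List.mem_map]
      rintro _ ⟨q, hq, rfl⟩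
      exact count_le_count_of_uW_wltN_uW_append (hL q hq).1 hkm (hL q hq).2)
  rw [heq, heq] at hle
  omega

/-- Type `Aₙ`: let `B = {[u_{km}] : 1 ≤ k ≤ m ≤ n}`.  For each of the words
`w` below — (i) `x_k u_{k+1,s}`, (ii) `x_k u_{rs}` with `k ≤ r ≠ k+1`,
(iii) `u_{km} u_{k+1,s}` with `m ≥ s`, (iv) `u_{km} u_{ks}` with `m < s`,
and (v) the powers `u_{km}^h` — the constitution (multidegree) of `w` differs
from the constitution of every super-word in super-letters from `B` that are
strictly smaller than the super-letter `[c]` in question (`c = w` in cases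
(i)–(iv), `c = u_{km}` in case (v)). -/
theorem stmt_14 (n : ℕ) (c w : List ℕ)
    (hw :
      (∃ k s, 1 ≤ k ∧ k + 1 ≤ s ∧ s ≤ n ∧ w = uW k s ∧ c = w) ∨
      (∃ k r s, 1 ≤ k ∧ k ≤ r ∧ r ≠ k + 1 ∧ r ≤ s ∧ s ≤ n ∧
        w = k :: uW r s ∧ c = w) ∨
      (∃ k m s, 1 ≤ k ∧ k ≤ m ∧ k + 1 ≤ s ∧ s ≤ m ∧ m ≤ n ∧
        w = uW k m ++ uW (k + 1) s ∧ c = w) ∨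
      (∃ k m s, 1 ≤ k ∧ k ≤ m ∧ m < s ∧ s ≤ n ∧
        w = uW k m ++ uW k s ∧ c = w) ∨
      (∃ k m h, 1 ≤ k ∧ k ≤ m ∧ m ≤ n ∧ 1 ≤ h ∧
        w = (List.replicate h (uW k m)).flatten ∧ c = uW k m)) :
    ∀ L : List (ℕ × ℕ),
      (∀ q ∈ L, 1 ≤ q.1 ∧ q.1 ≤ q.2 ∧ q.2 ≤ n ∧ wltN (uW q.1 q.2) c) →
      ¬ (∀ i : ℕ, ((L.map (fun q => uW q.1 q.2)).flatten).count i = w.count i) := by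
  obtain ⟨k, m, r, hkm, rfl, hcount⟩ :
      ∃ k m r, k ≤ m ∧ c = uW k m ++ r ∧ w.count (m + 1) < w.count k := by
    rcases hw with ⟨k, s, -, hks, -, rfl, rfl⟩ | ⟨k, r, s, -, hkr, hrk, -, -, rfl, rfl⟩ |
      ⟨k, m, s, -, hkm, -, hsm, -, rfl, rfl⟩ | ⟨k, m, s, -, hkm, -, -, rfl, rfl⟩ |
      ⟨k, m, h, -, hkm, -, hh, rfl, rfl⟩
    · refine ⟨k, s, [], by omega, (List.append_nil _).symm, ?_⟩
      simp only [count_uW]; split_ifs <;> omega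
    · refine ⟨k, k, uW r s, le_rfl, by simp [uW], ?_⟩
      simp only [List.count_cons, beq_iff_eq, count_uW]; split_ifs <;> omega
    · refine ⟨k, m, uW (k + 1) s, hkm, rfl, ?_⟩
      simp only [List.count_append, count_uW]; split_ifs <;> omega
    · refine ⟨k, m, uW k s, hkm, rfl, ?_⟩
      simp only [List.count_append, count_uW]; split_ifs <;> omega
    · refine ⟨k, m, [], hkm, (List.append_nil _).symm, ?_⟩
      simp only [List.count_flatten, List.map_replicate, List.sum_replicate, smul_eq_mul, count_uW]
      split_ifs <;> omega
  exact fun L hL => not_count_flatten_eq_of_wltN_uW_append hkm hcount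
    fun q hq => ⟨(hL q hq).2.1, (hL q hq).2.2.2⟩
end
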